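/- arXiv:1705.09218 — 2 statements merged into one kernel-verified Lean document; each statement's English description precedes it below -/
import Mathlib

section
/- Let M be a stable matching with closed subset S, (m,w) ∈ M a pair not in the woman-optimal matching Mz, and ρ_e the unique rotation eliminating (m,w). Then S↓ = S ∪ {ρ_e} ∪ (predecessors of ρ_e \ S) is a closed subset, and the corresponding stable matching M↓ does not contain the pair (m, w) and is dominated by M. -/
/-- A stable-marriage instance with `n` men and `n` women: each man `m` ranks the
women via `mrank m` (lower rank = more preferred), each woman `w` ranks the men
via `wrank w`; rankings are strict, i.e. injective. -/
structure SMInst (n : ℕ) where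
  mrank : Fin n → Fin n → ℕ
  wrank : Fin n → Fin n → ℕ
  mrank_inj : ∀ m, Function.Injective (mrank m)
  wrank_inj : ∀ w, Function.Injective (wrank w)

namespace SMInst

variable {n : ℕ} (I : SMInst n)

/-- A matching is a bijection from men to women; the pair `(m, w)` blocks `M` if `m`
strictly prefers `w` to his partner `M m` and `w` strictly prefers `m` to her partner. -/
def Blocks (M : Fin n ≃ Fin n) (m w : Fin n) : Prop :=
  I.mrank m w < I.mrank m (M m) ∧ I.wrank w m < I.wrank w (M.symm w)

/-- A matching is stable iff it admits no blocking pair. -/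
def IsStable (M : Fin n ≃ Fin n) : Prop :=
  ∀ m w, ¬ I.Blocks M m w

/-- `M₁ ⪯ M₂` : every man weakly prefers his partner in `M₁` to his partner in `M₂`. -/
def Dominates (M₁ M₂ : Fin n ≃ Fin n) : Prop :=
  ∀ m, I.mrank m (M₁ m) ≤ I.mrank m (M₂ m)

/-- The man-optimal stable matching (the output of men-proposing Gale–Shapley):
stable and dominating every stable matching. -/
def IsManOptimal (M₀ : Fin n ≃ Fin n) : Prop :=
  I.IsStable M₀ ∧ ∀ M, I.IsStable M → I.Dominates M₀ M

/-- The woman-optimal (man-pessimal) stable matching. -/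
def IsWomanOptimal (Mz : Fin n ≃ Fin n) : Prop :=
  I.IsStable Mz ∧ ∀ M, I.IsStable M → I.Dominates M Mz

/-- `d(M, M')` : the number of men with different partners in `M` and `M'`. -/
def mdist (M M' : Fin n ≃ Fin n) : ℕ :=
  let _ := I
  (Finset.univ.filter fun m => M m ≠ M' m).card

/-- `L` is a rotation exposed in `M`: a cyclic list of at least two pairs `(mᵢ, wᵢ)` of `M`
with distinct men, such that `w_{i+1}` is the first woman strictly below `wᵢ` on `mᵢ`'s
list who prefers `mᵢ` to her `M`-partner. -/
def ExposedIn (M : Fin n ≃ Fin n) (L : List (Fin n × Fin n)) : Prop :=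
  2 ≤ L.length ∧ (L.map Prod.fst).Nodup ∧ (∀ p ∈ L, M p.1 = p.2) ∧
  ∀ i : Fin L.length,
    I.mrank (L.get i).1 (L.get i).2 <
      I.mrank (L.get i).1 (L.get ⟨(i.1 + 1) % L.length, Nat.mod_lt _ i.pos⟩).2 ∧
    I.wrank (L.get ⟨(i.1 + 1) % L.length, Nat.mod_lt _ i.pos⟩).2 (L.get i).1 <
      I.wrank (L.get ⟨(i.1 + 1) % L.length, Nat.mod_lt _ i.pos⟩).2
        (L.get ⟨(i.1 + 1) % L.length, Nat.mod_lt _ i.pos⟩).1 ∧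
    ∀ w, I.mrank (L.get i).1 (L.get i).2 < I.mrank (L.get i).1 w →
      I.mrank (L.get i).1 w <
        I.mrank (L.get i).1 (L.get ⟨(i.1 + 1) % L.length, Nat.mod_lt _ i.pos⟩).2 →
      ¬ I.wrank w (L.get i).1 < I.wrank w (M.symm w)

/-- `M'` is obtained from `M` by eliminating the rotation `L` exposed in `M`:
each man `mᵢ` of `L` moves to `w_{i+1}`, all other men keep their partners. -/
def Elim (M M' : Fin n ≃ Fin n) (L : List (Fin n × Fin n)) : Prop :=
  I.ExposedIn M L ∧
  (∀ i : Fin L.length,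
    M' (L.get i).1 = (L.get ⟨(i.1 + 1) % L.length, Nat.mod_lt _ i.pos⟩).2) ∧
  ∀ m : Fin n, m ∉ L.map Prod.fst → M' m = M m

/-- `ElimSeq M Ls M'` : applying the rotations of `Ls` in order starting from `M` yields `M'`. -/
def ElimSeq : (Fin n ≃ Fin n) → List (List (Fin n × Fin n)) → (Fin n ≃ Fin n) → Prop
  | M, [], M' => M' = M
  | M, L :: Ls, M' => ∃ Mmid, I.Elim M Mmid L ∧ ElimSeq Mmid Ls M'

/-- A rotation of the instance: a cyclic list exposed in some stable matching. -/
def IsRotation (L : List (Fin n × Fin n)) : Prop :=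
  ∃ M, I.IsStable M ∧ I.ExposedIn M L

/-- `ρ' ≪ ρ` : `ρ'` is eliminated in every sequence of rotation eliminations starting at
the man-optimal matching `M₀` and ending at a stable matching in which `ρ` is exposed.
(Rotations are identified up to their sets of pairs.) -/
def Precedes (L' L : List (Fin n × Fin n)) : Prop :=
  ∀ M₀ Ls M, I.IsManOptimal M₀ → I.ElimSeq M₀ Ls M → I.IsStable M → I.ExposedIn M L →
    ∃ K ∈ Ls, K.toFinset = L'.toFinset

/-- The rotation `L` produces the pair `(m, w)` : eliminating `L` matches `m` to `w`. -/
def Produces (L : List (Fin n × Fin n)) (m w : Fin n) : Prop :=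
  let _ := I
  ∃ i : Fin L.length,
    (L.get i).1 = m ∧ (L.get ⟨(i.1 + 1) % L.length, Nat.mod_lt _ i.pos⟩).2 = w

/-- The set of rotations of the instance, identified with their sets of pairs. -/
def RotSet : Set (Finset (Fin n × Fin n)) :=
  {R | ∃ L, I.IsRotation L ∧ L.toFinset = R}

/-- Precedence of rotations, on rotations-as-sets-of-pairs. -/
def PrecedesR (R' R : Finset (Fin n × Fin n)) : Prop :=
  ∃ L' L, I.IsRotation L' ∧ I.IsRotation L ∧ L'.toFinset = R' ∧ L.toFinset = R ∧
    I.Precedes L' L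

/-- Closed subsets (down-sets) of the rotation poset. -/
def IsClosedF (S : Finset (Finset (Fin n × Fin n))) : Prop :=
  (∀ R ∈ S, R ∈ I.RotSet) ∧ ∀ R ∈ S, ∀ R' ∈ I.RotSet, I.PrecedesR R' R → R' ∈ S

/-- `X(T)` : the set of men involved in at least one rotation of `T`. -/
def menOf (T : Finset (Finset (Fin n × Fin n))) : Finset (Fin n) :=
  let _ := I
  T.biUnion fun R => R.image Prod.fst

/-- The stable matching corresponding to the closed subset `S`: obtained from `M₀` by
eliminating the rotations of `S`, each exactly once, in some valid order. -/
def Corresponds (M₀ : Fin n ≃ Fin n) (S : Finset (Finset (Fin n × Fin n)))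
    (M : Fin n ≃ Fin n) : Prop :=
  ∃ Ls : List (List (Fin n × Fin n)),
    (Ls.map List.toFinset).Nodup ∧ (Ls.map List.toFinset).toFinset = S ∧
    I.ElimSeq M₀ Ls M

end SMInst
namespace SMInst

variable {n : ℕ} {I : SMInst n}

/-- The successor relation underlying exposed rotations. -/
def Succ (I : SMInst n) (X : Fin n ≃ Fin n) (p q : Fin n × Fin n) : Prop :=
  X q.1 = q.2 ∧ I.mrank p.1 p.2 < I.mrank p.1 q.2 ∧ I.wrank q.2 p.1 < I.wrank q.2 q.1 ∧
  ∀ w, I.mrank p.1 p.2 < I.mrank p.1 w → I.mrank p.1 w < I.mrank p.1 q.2 →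
    ¬ I.wrank w p.1 < I.wrank w (X.symm w)

lemma succ_unique {X Y : Fin n ≃ Fin n} {p q q' : Fin n × Fin n}
    (hq : I.Succ X p q) (hq' : I.Succ Y p q')
    (hqY : Y q.1 = q.2) (hq'X : X q'.1 = q'.2) : q = q' := by
  obtain ⟨hm1, hlt1, hw1, hmin1⟩ := hq
  obtain ⟨hm2, hlt2, hw2, hmin2⟩ := hq'
  rcases lt_trichotomy (I.mrank p.1 q.2) (I.mrank p.1 q'.2) with h | h | h
  · exfalso
    have hmin := hmin2 q.2 hlt1 h
    have hsymm : Y.symm q.2 = q.1 := by rw [← hqY]; exact Y.symm_apply_apply _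
    rw [hsymm] at hmin
    exact hmin hw1
  · have h2 : q.2 = q'.2 := I.mrank_inj p.1 h
    have h1 : q.1 = q'.1 := by
      have : Y q.1 = Y q'.1 := by rw [hqY, hm2, h2]
      exact Y.injective this
    exact Prod.ext h1 h2
  · exfalso
    have hmin := hmin1 q'.2 hlt2 h
    have hsymm : X.symm q'.2 = q'.1 := by rw [← hq'X]; exact X.symm_apply_apply _
    rw [hsymm] at hmin
    exact hmin hw2

lemma ExposedIn.pos {X : Fin n ≃ Fin n} {L : List (Fin n × Fin n)}
    (h : I.ExposedIn X L) : 0 < L.length := lt_of_lt_of_le two_pos h.1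

lemma ExposedIn.matched {X : Fin n ≃ Fin n} {L : List (Fin n × Fin n)}
    (h : I.ExposedIn X L) {p : Fin n × Fin n} (hp : p ∈ L) : X p.1 = p.2 := h.2.2.1 p hp

lemma ExposedIn.succ_get {X : Fin n ≃ Fin n} {L : List (Fin n × Fin n)}
    (h : I.ExposedIn X L) (i : Fin L.length) :
    I.Succ X (L.get i) (L.get ⟨(i.1 + 1) % L.length, Nat.mod_lt _ i.pos⟩) := by
  obtain ⟨-, -, hm, hc⟩ := h
  exact ⟨hm _ (List.get_mem _ _), (hc i).1, (hc i).2.1, (hc i).2.2⟩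

lemma exposed_transfer {X Y : Fin n ≃ Fin n} {L K : List (Fin n × Fin n)}
    (hL : I.ExposedIn X L) (hK : I.ExposedIn Y K)
    (hset : L.toFinset = K.toFinset) : I.ExposedIn X K := by
  have hmem : ∀ p : Fin n × Fin n, p ∈ K ↔ p ∈ L := by
    intro p; rw [← List.mem_toFinset, ← hset, List.mem_toFinset]
  refine ⟨hK.1, hK.2.1, fun p hp => hL.matched ((hmem p).1 hp), fun i => ?_⟩
  obtain ⟨j, hj⟩ := List.mem_iff_get.1 ((hmem _).1 (List.get_mem _ i))
  have hSX := hL.succ_get j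
  have hSY := hK.succ_get i
  rw [hj] at hSX
  have hq : L.get ⟨(j.1 + 1) % L.length, Nat.mod_lt _ j.pos⟩
      = K.get ⟨(i.1 + 1) % K.length, Nat.mod_lt _ i.pos⟩ :=
    succ_unique hSX hSY (hK.matched ((hmem _).2 (List.get_mem _ _))) (hL.matched ((hmem _).1 (List.get_mem _ _)))
  rw [← hq]
  exact ⟨hSX.2.1, hSX.2.2.1, hSX.2.2.2⟩

end SMInst
namespace SMInst

variable {n : ℕ} {I : SMInst n}

lemma ExposedIn.pair_of_mem {X : Fin n ≃ Fin n} {L : List (Fin n × Fin n)} {m : Fin n}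
    (h : I.ExposedIn X L) (hm : m ∈ L.map Prod.fst) :
    ∃ i : Fin L.length, L.get i = (m, X m) := by
  obtain ⟨p, hp, hp1⟩ := List.mem_map.1 hm
  obtain ⟨i, hi⟩ := List.mem_iff_get.1 hp
  refine ⟨i, ?_⟩
  rw [hi]
  have h2 := h.matched hp
  refine Prod.ext hp1 ?_
  rw [← h2, hp1]

lemma Elim.exposed {X Y : Fin n ≃ Fin n} {L : List (Fin n × Fin n)}
    (h : I.Elim X Y L) : I.ExposedIn X L := h.1

lemma Elim.get_eq {X Y : Fin n ≃ Fin n} {L : List (Fin n × Fin n)}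
    (h : I.Elim X Y L) (i : Fin L.length) :
    Y (L.get i).1 = (L.get ⟨(i.1 + 1) % L.length, Nat.mod_lt _ i.pos⟩).2 := h.2.1 i

lemma Elim.not_mem_eq {X Y : Fin n ≃ Fin n} {L : List (Fin n × Fin n)} {m : Fin n}
    (h : I.Elim X Y L) (hm : m ∉ L.map Prod.fst) : Y m = X m := h.2.2 m hm

lemma Elim.lt_of_mem {X Y : Fin n ≃ Fin n} {L : List (Fin n × Fin n)} {m : Fin n}
    (h : I.Elim X Y L) (hm : m ∈ L.map Prod.fst) :
    I.mrank m (X m) < I.mrank m (Y m) := by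
  obtain ⟨i, hi⟩ := h.exposed.pair_of_mem hm
  have h1 := (h.exposed.succ_get i).2.1
  have h2 := h.get_eq i
  rw [hi] at h1 h2
  simp only at h1 h2
  rw [h2]; exact h1

lemma Elim.le {X Y : Fin n ≃ Fin n} {L : List (Fin n × Fin n)}
    (h : I.Elim X Y L) (m : Fin n) : I.mrank m (X m) ≤ I.mrank m (Y m) := by
  by_cases hm : m ∈ L.map Prod.fst
  · exact le_of_lt (h.lt_of_mem hm)
  · rw [h.not_mem_eq hm]

/-- a woman of the rotation strictly improves -/
lemma Elim.symm_lt_of_snd {X Y : Fin n ≃ Fin n} {L : List (Fin n × Fin n)}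
    (h : I.Elim X Y L) {w : Fin n} (hw : w ∈ L.map Prod.snd) :
    I.wrank w (Y.symm w) < I.wrank w (X.symm w) := by
  obtain ⟨p, hp, hp2⟩ := List.mem_map.1 hw
  obtain ⟨k, hk⟩ := List.mem_iff_get.1 hp
  have hpos : 0 < L.length := h.exposed.pos
  have hXp : X (L.get k).1 = (L.get k).2 := h.exposed.matched (List.get_mem _ _)
  set j : Fin L.length := ⟨(k.1 + L.length - 1) % L.length, Nat.mod_lt _ hpos⟩ with hjdef
  have hj : (j.1 + 1) % L.length = k.1 := by
    show ((k.1 + L.length - 1) % L.length + 1) % L.length = k.1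
    rw [Nat.mod_add_mod]
    have h1 : k.1 + L.length - 1 + 1 = k.1 + L.length := by omega
    rw [h1, Nat.add_mod_right, Nat.mod_eq_of_lt k.2]
  have hnext : (⟨(j.1 + 1) % L.length, Nat.mod_lt _ j.pos⟩ : Fin L.length) = k := Fin.ext hj
  have hY : Y (L.get j).1 = w := by
    have := h.get_eq j
    rw [hnext] at this
    rw [this, hk, hp2]
  have hsymmY : Y.symm w = (L.get j).1 := by rw [← hY, Equiv.symm_apply_apply]
  have hsymmX : X.symm w = (L.get k).1 := by
    have : X (L.get k).1 = w := by rw [hXp, hk, hp2]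
    rw [← this, Equiv.symm_apply_apply]
  have hcond := (h.exposed.succ_get j).2.2.1
  rw [hnext] at hcond
  have hw2 : (L.get k).2 = w := by rw [hk, hp2]
  rw [hw2] at hcond
  rw [hsymmY, hsymmX]
  exact hcond

/-- every woman weakly improves when a rotation is eliminated -/
lemma Elim.symm_le {X Y : Fin n ≃ Fin n} {L : List (Fin n × Fin n)}
    (h : I.Elim X Y L) (w : Fin n) :
    I.wrank w (Y.symm w) ≤ I.wrank w (X.symm w) := by
  by_cases hw : w ∈ L.map Prod.snd
  · exact le_of_lt (h.symm_lt_of_snd hw)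
  · have hx : X.symm w ∉ L.map Prod.fst := by
      intro hmem
      obtain ⟨i, hi⟩ := h.exposed.pair_of_mem hmem
      apply hw
      rw [List.mem_map]
      exact ⟨L.get i, List.get_mem _ _, by rw [hi]; simp⟩
    have hYX : Y (X.symm w) = w := by rw [h.not_mem_eq hx, Equiv.apply_symm_apply]
    have hYs : Y.symm w = X.symm w := by rw [Equiv.symm_apply_eq]; exact hYX.symm
    rw [hYs]

lemma elim_exists {X : Fin n ≃ Fin n} {L : List (Fin n × Fin n)}
    (h : I.ExposedIn X L) : ∃ Y, I.Elim X Y L := by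
  classical
  refine ⟨(L.map Prod.fst).formPerm.trans X, h, fun i => ?_, fun m hm => ?_⟩
  · have hlen : (L.map Prod.fst).length = L.length := List.length_map _
    have hi : i.1 < (L.map Prod.fst).length := by rw [hlen]; exact i.2
    have hfp := List.formPerm_apply_getElem _ h.2.1 i.1 hi
    have hget : (L.map Prod.fst)[i.1] = (L.get i).1 := by
      simp [List.getElem_map]
    have hget2 : (L.map Prod.fst)[(i.1 + 1) % (L.map Prod.fst).length]'(Nat.mod_lt _ (by omega)) =
        (L.get ⟨(i.1 + 1) % L.length, Nat.mod_lt _ i.pos⟩).1 := by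
      simp only [hlen]
      simp [List.getElem_map]
    show X ((L.map Prod.fst).formPerm (L.get i).1) = _
    rw [← hget, hfp]
    rw [hget2]
    exact h.matched (List.get_mem _ _)
  · show X ((L.map Prod.fst).formPerm m) = X m
    rw [List.formPerm_apply_of_notMem hm]

lemma elim_unique {X Y Y' : Fin n ≃ Fin n} {L K : List (Fin n × Fin n)}
    (h1 : I.Elim X Y L) (h2 : I.Elim X Y' K) (hs : L.toFinset = K.toFinset) : Y = Y' := by
  have hmem : ∀ p : Fin n × Fin n, p ∈ L ↔ p ∈ K := by
    intro p; rw [← List.mem_toFinset, hs, List.mem_toFinset]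
  apply Equiv.ext; intro m
  by_cases hm : m ∈ L.map Prod.fst
  · obtain ⟨i, hi⟩ := h1.exposed.pair_of_mem hm
    have hmK : m ∈ K.map Prod.fst :=
      List.mem_map.2 ⟨(m, X m), (hmem _).1 (hi ▸ List.get_mem _ _), rfl⟩
    obtain ⟨j, hj⟩ := h2.exposed.pair_of_mem hmK
    have s1 := h1.exposed.succ_get i; rw [hi] at s1
    have s2 := h2.exposed.succ_get j; rw [hj] at s2
    have heq : L.get ⟨(i.1 + 1) % L.length, Nat.mod_lt _ i.pos⟩
        = K.get ⟨(j.1 + 1) % K.length, Nat.mod_lt _ j.pos⟩ :=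
      succ_unique s1 s2
        (h2.exposed.matched ((hmem _).1 (List.get_mem _ _)))
        (h1.exposed.matched ((hmem _).2 (List.get_mem _ _)))
    have e1 := h1.get_eq i; rw [hi] at e1
    have e2 := h2.get_eq j; rw [hj] at e2
    simp only at e1 e2
    rw [e1, e2, heq]
  · have hmK : m ∉ K.map Prod.fst := by
      intro hc
      obtain ⟨p, hp, hp1⟩ := List.mem_map.1 hc
      exact hm (List.mem_map.2 ⟨p, (hmem _).2 hp, hp1⟩)
    rw [h1.not_mem_eq hm, h2.not_mem_eq hmK]

end SMInst
namespace SMInst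

variable {n : ℕ} {I : SMInst n}

/-- eliminating an exposed rotation preserves stability -/
lemma Elim.stable {X Y : Fin n ≃ Fin n} {L : List (Fin n × Fin n)}
    (hX : I.IsStable X) (h : I.Elim X Y L) : I.IsStable Y := by
  rintro a b ⟨h1, h2⟩
  have hWb : I.wrank b (Y.symm b) ≤ I.wrank b (X.symm b) := h.symm_le b
  by_cases ha : a ∈ L.map Prod.fst
  · obtain ⟨i, hi⟩ := h.exposed.pair_of_mem ha
    have hs := h.exposed.succ_get i; rw [hi] at hs
    have he := h.get_eq i; rw [hi] at he
    simp only at he hs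
    rw [he] at h1
    rcases lt_trichotomy (I.mrank a b) (I.mrank a (X a)) with hc | hc | hc
    · exact hX a b ⟨hc, lt_of_lt_of_le h2 hWb⟩
    · have hb : b = X a := I.mrank_inj a hc
      have hsnd : b ∈ L.map Prod.snd := by
        rw [List.mem_map]
        exact ⟨L.get i, List.get_mem _ _, by rw [hi, hb]⟩
      have hXs : X.symm b = a := by rw [hb, Equiv.symm_apply_apply]
      have := h.symm_lt_of_snd hsnd
      rw [hXs] at this
      exact lt_asymm h2 this
    · have h3 := hs.2.2.2 b hc h1
      exact h3 (lt_of_lt_of_le h2 hWb)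
  · rw [h.not_mem_eq ha] at h1
    exact hX a b ⟨h1, lt_of_lt_of_le h2 hWb⟩

lemma ElimSeq.append {X Y Z : Fin n ≃ Fin n} {u v : List (List (Fin n × Fin n))}
    (h1 : I.ElimSeq X u Y) (h2 : I.ElimSeq Y v Z) : I.ElimSeq X (u ++ v) Z := by
  induction u generalizing X with
  | nil => rw [List.nil_append]; exact h1 ▸ h2
  | cons L u ih =>
    obtain ⟨Xm, hE, hs⟩ := h1
    exact ⟨Xm, hE, ih hs⟩

lemma ElimSeq.stable {X Y : Fin n ≃ Fin n} {Ls : List (List (Fin n × Fin n))}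
    (hX : I.IsStable X) (h : I.ElimSeq X Ls Y) : I.IsStable Y := by
  induction Ls generalizing X with
  | nil => exact h ▸ hX
  | cons L u ih =>
    obtain ⟨Xm, hE, hs⟩ := h
    exact ih (hE.stable hX) hs

lemma ElimSeq.le {X Y : Fin n ≃ Fin n} {Ls : List (List (Fin n × Fin n))}
    (h : I.ElimSeq X Ls Y) (m : Fin n) : I.mrank m (X m) ≤ I.mrank m (Y m) := by
  induction Ls generalizing X with
  | nil => rw [h]
  | cons L u ih =>
    obtain ⟨Xm, hE, hs⟩ := h
    exact le_trans (hE.le m) (ih hs)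

lemma ElimSeq.mem_split {X Y : Fin n ≃ Fin n} {Ls : List (List (Fin n × Fin n))}
    {K : List (Fin n × Fin n)} (h : I.ElimSeq X Ls Y) (hK : K ∈ Ls) :
    ∃ u v X1 X2, Ls = u ++ K :: v ∧ I.ElimSeq X u X1 ∧ I.Elim X1 X2 K ∧ I.ElimSeq X2 v Y := by
  induction Ls generalizing X with
  | nil => cases hK
  | cons L u ih =>
    obtain ⟨Xm, hE, hs⟩ := h
    rcases List.mem_cons.1 hK with rfl | hK'
    · exact ⟨[], u, X, Xm, rfl, rfl, hE, hs⟩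
    · obtain ⟨u', v', X1, X2, rfl, a, b, c⟩ := ih hs hK'
      exact ⟨L :: u', v', X1, X2, rfl, ⟨Xm, hE, a⟩, b, c⟩

def phi (I : SMInst n) (X : Fin n ≃ Fin n) : ℕ := ∑ m, I.mrank m (X m)

lemma Elim.phi_lt {X Y : Fin n ≃ Fin n} {L : List (Fin n × Fin n)}
    (h : I.Elim X Y L) : I.phi X < I.phi Y := by
  have hmem : (L.get ⟨0, h.exposed.pos⟩).1 ∈ L.map Prod.fst :=
    List.mem_map.2 ⟨_, List.get_mem _ _, rfl⟩
  exact Finset.sum_lt_sum (fun m _ => h.le m) ⟨_, Finset.mem_univ _, h.lt_of_mem hmem⟩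

lemma Dominates.phi_le {X Y : Fin n ≃ Fin n} (h : I.Dominates X Y) : I.phi X ≤ I.phi Y :=
  Finset.sum_le_sum fun m _ => h m

lemma ElimSeq.phi_le {X Y : Fin n ≃ Fin n} {Ls : List (List (Fin n × Fin n))}
    (h : I.ElimSeq X Ls Y) : I.phi X ≤ I.phi Y :=
  Finset.sum_le_sum fun m _ => h.le m

/-- if `A` dominates `B` (both stable) then every woman weakly prefers `B` -/
lemma women_prefer {A B : Fin n ≃ Fin n} (hA : I.IsStable A) (hB : I.IsStable B)
    (hd : I.Dominates A B) (w : Fin n) :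
    I.wrank w (B.symm w) ≤ I.wrank w (A.symm w) := by
  by_contra hcon
  push_neg at hcon
  set c := A.symm w with hc
  have h1 : I.mrank c (A c) ≤ I.mrank c (B c) := hd c
  have hAc : A c = w := Equiv.apply_symm_apply _ _
  have hne : B c ≠ w := by
    intro he
    have hBs : B.symm w = c := by rw [← he, Equiv.symm_apply_apply]
    rw [hBs] at hcon
    exact lt_irrefl _ hcon
  have hlt : I.mrank c w < I.mrank c (B c) := by
    rw [hAc] at h1
    rcases lt_or_eq_of_le h1 with h | h
    · exact h
    · exact absurd (I.mrank_inj c h).symm hne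
  exact hB c w ⟨hlt, hcon⟩

lemma no_exposed_wopt {Mz : Fin n ≃ Fin n} (hMz : I.IsWomanOptimal Mz)
    {L : List (Fin n × Fin n)} (h : I.ExposedIn Mz L) : False := by
  obtain ⟨Y, hE⟩ := elim_exists h
  have hYs : I.IsStable Y := hE.stable hMz.1
  have hd := hMz.2 Y hYs
  have hmem : (L.get ⟨0, h.pos⟩).1 ∈ L.map Prod.fst :=
    List.mem_map.2 ⟨_, List.get_mem _ _, rfl⟩
  exact absurd (hd (L.get ⟨0, h.pos⟩).1) (not_le.2 (hE.lt_of_mem hmem))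

lemma ElimSeq.isRotation {X Y : Fin n ≃ Fin n} {Ls : List (List (Fin n × Fin n))}
    {K : List (Fin n × Fin n)} (hX : I.IsStable X) (h : I.ElimSeq X Ls Y) (hK : K ∈ Ls) :
    I.IsRotation K := by
  obtain ⟨u, v, X1, X2, -, h1, h2, -⟩ := h.mem_split hK
  exact ⟨X1, h1.stable hX, h2.exposed⟩

lemma ElimSeq.sets_nodup {X Y : Fin n ≃ Fin n} {Ls : List (List (Fin n × Fin n))}
    (h : I.ElimSeq X Ls Y) : (Ls.map List.toFinset).Nodup := by
  induction Ls generalizing X with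
  | nil => simp
  | cons L u ih =>
    obtain ⟨Xm, hE, hs⟩ := h
    rw [List.map_cons, List.nodup_cons]
    refine ⟨?_, ih hs⟩
    intro hmemmap
    obtain ⟨K, hK, hKs⟩ := List.mem_map.1 hmemmap
    obtain ⟨u', v', X1, X2, -, h1, h2, -⟩ := hs.mem_split hK
    have hp : L.get ⟨0, hE.exposed.pos⟩ ∈ L := List.get_mem _ _
    set p := L.get ⟨0, hE.exposed.pos⟩ with hpdef
    have hpK : p ∈ K := by rw [← List.mem_toFinset, hKs, List.mem_toFinset]; exact hp
    have hXp : X p.1 = p.2 := hE.exposed.matched hp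
    have hfst : p.1 ∈ L.map Prod.fst := List.mem_map.2 ⟨p, hp, rfl⟩
    have hlt : I.mrank p.1 p.2 < I.mrank p.1 (Xm p.1) := by
      rw [← hXp]; exact hE.lt_of_mem hfst
    have hle : I.mrank p.1 (Xm p.1) ≤ I.mrank p.1 (X1 p.1) := h1.le p.1
    have hX1 : X1 p.1 = p.2 := h2.exposed.matched hpK
    rw [hX1] at hle
    omega

end SMInst
namespace SMInst

variable {n : ℕ} {I : SMInst n}

/-- if stable `A` strictly dominates stable `B`, a rotation is exposed in `A` whose
elimination stays (weakly) above `B`. -/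
lemma exposed_exists {A B : Fin n ≃ Fin n} (hA : I.IsStable A) (hB : I.IsStable B)
    (hd : I.Dominates A B) (hne : A ≠ B) :
    ∃ L Y, I.Elim A Y L ∧ I.Dominates Y B := by
  classical
  set cand : Fin n → Finset (Fin n) := fun m =>
    Finset.univ.filter (fun w' => I.mrank m (A m) < I.mrank m w' ∧
      I.wrank w' m < I.wrank w' (A.symm w')) with hcand
  have hcand_mem : ∀ m w', w' ∈ cand m ↔ (I.mrank m (A m) < I.mrank m w' ∧
      I.wrank w' m < I.wrank w' (A.symm w')) := by
    intro m w'; rw [hcand]; simp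
  have hBcand : ∀ m, A m ≠ B m → B m ∈ cand m := by
    intro m hm
    rw [hcand_mem]
    constructor
    · rcases lt_or_eq_of_le (hd m) with h | h
      · exact h
      · exact absurd (I.mrank_inj m h) hm
    · have hwp := women_prefer hA hB hd (B m)
      have hBs : B.symm (B m) = m := Equiv.symm_apply_apply _ _
      rw [hBs] at hwp
      rcases lt_or_eq_of_le hwp with h | h
      · exact h
      · exfalso; apply hm
        have h2 := I.wrank_inj (B m) h
        nth_rewrite 1 [h2]
        rw [Equiv.apply_symm_apply]
  obtain ⟨s, hs_mem, hs_min⟩ : ∃ s : Fin n → Fin n,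
      (∀ m, A m ≠ B m → s m ∈ cand m) ∧
      (∀ m, A m ≠ B m → ∀ w'' ∈ cand m, I.mrank m (s m) ≤ I.mrank m w'') := by
    have hsel : ∀ m, ∃ w', A m ≠ B m →
        w' ∈ cand m ∧ ∀ w'' ∈ cand m, I.mrank m w' ≤ I.mrank m w'' := by
      intro m
      by_cases h : A m ≠ B m
      · obtain ⟨w', hw1, hw2⟩ := Finset.exists_min_image (cand m) (I.mrank m) ⟨B m, hBcand m h⟩
        exact ⟨w', fun _ => ⟨hw1, hw2⟩⟩
      · exact ⟨A m, fun hc => absurd hc h⟩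
    choose s hsspec using hsel
    exact ⟨s, fun m h => (hsspec m h).1, fun m h => (hsspec m h).2⟩
  set f : Fin n → Fin n := fun m => A.symm (s m) with hf
  have hAf : ∀ m, A (f m) = s m := fun m => Equiv.apply_symm_apply _ _
  have hAsf : ∀ m, A.symm (s m) = f m := fun m => rfl
  have hactive_f : ∀ m, A m ≠ B m → A (f m) ≠ B (f m) := by
    intro m hm hcon
    have hsm := (hcand_mem _ _).1 (hs_mem m hm)
    have hBf : B (f m) = s m := by rw [← hcon]; exact hAf m
    apply hB m (s m)
    constructor
    · have hle : I.mrank m (s m) ≤ I.mrank m (B m) := hs_min m hm _ (hBcand m hm)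
      rcases lt_or_eq_of_le hle with h | h
      · exact h
      · exfalso
        have hsB : s m = B m := I.mrank_inj m h
        have hfm : f m = m := B.injective (by rw [hBf, hsB])
        have hAm : A m = s m := by rw [← hAf m, hfm]
        rw [hsB] at hAm; exact hm hAm
    · have hBsymm : B.symm (s m) = f m := by rw [← hBf, Equiv.symm_apply_apply]
      rw [hBsymm, ← hAsf m]
      exact hsm.2
  have hfne : ∀ m, A m ≠ B m → f m ≠ m := by
    intro m hm hcon
    have h1 := ((hcand_mem _ _).1 (hs_mem m hm)).1
    have h2 : A m = s m := by rw [← hAf m, hcon]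
    rw [← h2] at h1; exact lt_irrefl _ h1
  have hex : ∃ m, A m ≠ B m := by
    by_contra hc; push_neg at hc
    exact hne (Equiv.ext hc)
  obtain ⟨a0, ha0⟩ := hex
  have hiter : ∀ k, A (f^[k] a0) ≠ B (f^[k] a0) := by
    intro k; induction k with
    | zero => exact ha0
    | succ k ih => rw [Function.iterate_succ_apply']; exact hactive_f _ ih
  have hcard : Fintype.card (Fin n) < Fintype.card (Fin (n + 1)) := by simp
  obtain ⟨x, y, hxy, hfeq⟩ :=
    Fintype.exists_ne_map_eq_of_card_lt (fun k : Fin (n + 1) => f^[k.1] a0) hcard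
  have hij : ∃ i j : ℕ, i < j ∧ f^[i] a0 = f^[j] a0 := by
    rcases lt_trichotomy x.1 y.1 with h | h | h
    · exact ⟨x.1, y.1, h, hfeq⟩
    · exact absurd (Fin.ext h) hxy
    · exact ⟨y.1, x.1, h, hfeq.symm⟩
  obtain ⟨i, j, hij1, hij2⟩ := hij
  set p0 := f^[i] a0 with hp0
  have hper : f^[j - i] p0 = p0 := by
    rw [hp0, ← Function.iterate_add_apply]
    have hji : j - i + i = j := by omega
    rw [hji, ← hij2]
  have hperex : ∃ t, 0 < t ∧ f^[t] p0 = p0 := ⟨j - i, by omega, hper⟩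
  have hdpos : 0 < Nat.find hperex := (Nat.find_spec hperex).1
  have hdper : f^[Nat.find hperex] p0 = p0 := (Nat.find_spec hperex).2
  set d := Nat.find hperex with hd'
  have hdmin : ∀ t, t < d → ¬(0 < t ∧ f^[t] p0 = p0) := fun t ht => Nat.find_min hperex ht
  have hiterp : ∀ k, A (f^[k] p0) ≠ B (f^[k] p0) := by
    intro k; rw [hp0, ← Function.iterate_add_apply]; exact hiter _
  have hd2 : 2 ≤ d := by
    rcases Nat.lt_or_ge d 2 with h | h
    · exfalso
      have hd1 : d = 1 := by omega
      rw [hd1] at hdper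
      simp only [Function.iterate_one] at hdper
      exact hfne p0 (hiterp 0) hdper
    · exact h
  have hinj : ∀ t1 t2, t1 < d → t2 < d → f^[t1] p0 = f^[t2] p0 → t1 = t2 := by
    have key : ∀ t1 t2, t1 < d → t2 < d → t1 < t2 → f^[t1] p0 = f^[t2] p0 → False := by
      intro t1 t2 h1 h2 hlt heq
      have e1 : f^[d - t2 + t2] p0 = p0 := by
        have : d - t2 + t2 = d := by omega
        rw [this, hdper]
      rw [Function.iterate_add_apply, ← heq, ← Function.iterate_add_apply] at e1
      exact hdmin (d - t2 + t1) (by omega) ⟨by omega, e1⟩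
    intro t1 t2 h1 h2 heq
    rcases lt_trichotomy t1 t2 with h | h | h
    · exact absurd (key t1 t2 h1 h2 h heq) id
    · exact h
    · exact absurd (key t2 t1 h2 h1 h heq.symm) id
  set cyc : List (Fin n × Fin n) := (List.range d).map (fun t => (f^[t] p0, A (f^[t] p0)))
    with hcyc
  have hlen : cyc.length = d := by simp [hcyc]
  have hget : ∀ (i : Fin cyc.length), cyc.get i = (f^[i.1] p0, A (f^[i.1] p0)) := by
    intro i
    rw [List.get_eq_getElem]
    simp [hcyc]
  have hfnext : ∀ t : ℕ, t < d → f^[(t + 1) % d] p0 = f (f^[t] p0) := by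
    intro t ht
    rcases Nat.lt_or_ge (t + 1) d with h | h
    · rw [Nat.mod_eq_of_lt h, Function.iterate_succ_apply']
    · have ht1 : t + 1 = d := by omega
      rw [ht1, Nat.mod_self]
      simp only [Function.iterate_zero, id_eq]
      have hsucc : f (f^[t] p0) = f^[t + 1] p0 := (Function.iterate_succ_apply' f t p0).symm
      rw [hsucc, ht1, hdper]
  have hmodlen : ∀ t : ℕ, (t + 1) % cyc.length = (t + 1) % d :=
    fun t => congrArg (fun z => (t + 1) % z) hlen
  have hfst2 : ∀ (iF : Fin cyc.length),
      (cyc.get ⟨(iF.1 + 1) % cyc.length, Nat.mod_lt _ iF.pos⟩).1 = f (f^[iF.1] p0) := by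
    intro iF
    rw [hget]
    show f^[(iF.1 + 1) % cyc.length] p0 = _
    rw [hmodlen, hfnext iF.1 (hlen ▸ iF.2)]
  have hsnd2 : ∀ (iF : Fin cyc.length),
      (cyc.get ⟨(iF.1 + 1) % cyc.length, Nat.mod_lt _ iF.pos⟩).2 = A (f (f^[iF.1] p0)) := by
    intro iF
    rw [hget]
    show A (f^[(iF.1 + 1) % cyc.length] p0) = _
    rw [hmodlen, hfnext iF.1 (hlen ▸ iF.2)]
  have hnodupfst : (cyc.map Prod.fst).Nodup := by
    rw [hcyc, List.map_map]
    refine List.Nodup.map_on ?_ (List.nodup_range)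
    intro x1 hx1 x2 hx2 hfx
    exact hinj x1 x2 (List.mem_range.1 hx1) (List.mem_range.1 hx2) hfx
  have hexp : I.ExposedIn A cyc := by
    refine ⟨by rw [hlen]; exact hd2, hnodupfst, ?_, ?_⟩
    · intro p hp
      obtain ⟨t, ht, hpt⟩ := List.mem_map.1 hp
      rw [← hpt]
    · intro iF
      have g1 := hget iF
      simp only [g1, hfst2 iF, hsnd2 iF]
      set x := f^[iF.1] p0 with hx
      have hxact : A x ≠ B x := hiterp iF.1
      rw [hAf x]
      have hsm := (hcand_mem _ _).1 (hs_mem x hxact)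
      refine ⟨hsm.1, ?_, ?_⟩
      · rw [← hAsf x]; exact hsm.2
      · intro w hw1 hw2 hw3
        have hwc : w ∈ cand x := (hcand_mem _ _).2 ⟨hw1, hw3⟩
        exact absurd (hs_min x hxact w hwc) (not_le.2 hw2)
  obtain ⟨Y, hE⟩ := elim_exists hexp
  refine ⟨cyc, Y, hE, ?_⟩
  intro m
  by_cases hm : m ∈ cyc.map Prod.fst
  · obtain ⟨iF, hi⟩ := hexp.pair_of_mem hm
    have hgeq := hE.get_eq iF
    rw [hi] at hgeq
    simp only at hgeq
    rw [hgeq, hsnd2 iF]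
    have hmfix : m = f^[iF.1] p0 := by
      have g1 := hget iF
      rw [hi] at g1
      exact congrArg Prod.fst g1
    rw [← hmfix, hAf m]
    have hxact : A m ≠ B m := by rw [hmfix]; exact hiterp iF.1
    exact hs_min m hxact _ (hBcand m hxact)
  · rw [hE.not_mem_eq hm]
    exact hd m

/-- reachability: a stable matching can be transformed into any stable matching it
dominates by a sequence of rotation eliminations -/
lemma reach {A B : Fin n ≃ Fin n} (hA : I.IsStable A) (hB : I.IsStable B)
    (hd : I.Dominates A B) : ∃ Ls, I.ElimSeq A Ls B := by
  suffices h : ∀ (k : ℕ) (A : Fin n ≃ Fin n), I.IsStable A → I.Dominates A B →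
      I.phi B - I.phi A = k → ∃ Ls, I.ElimSeq A Ls B from h _ A hA hd rfl
  intro k
  induction k using Nat.strong_induction_on with
  | _ k IH =>
    intro A hA hd hk
    by_cases hAB : A = B
    · exact ⟨[], hAB.symm⟩
    · obtain ⟨L, Y, hE, hYd⟩ := exposed_exists hA hB hd hAB
      have hYs := hE.stable hA
      have h1 : I.phi A < I.phi Y := hE.phi_lt
      have h2 : I.phi Y ≤ I.phi B := hYd.phi_le
      have h3 : I.phi A ≤ I.phi B := hd.phi_le
      obtain ⟨Ls, hLs⟩ := IH (I.phi B - I.phi Y) (by omega) Y hYs hYd rfl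
      exact ⟨L :: Ls, Y, hE, hLs⟩

end SMInst
namespace SMInst

variable {n : ℕ} {I : SMInst n}

lemma ExposedIn.orbit {X : Fin n ≃ Fin n} {L : List (Fin n × Fin n)} (hL : I.ExposedIn X L)
    (P : Fin n × Fin n → Prop) (i0 : Fin L.length) (h0 : P (L.get i0))
    (hstep : ∀ i : Fin L.length, P (L.get i) →
      P (L.get ⟨(i.1 + 1) % L.length, Nat.mod_lt _ i.pos⟩)) :
    ∀ p ∈ L, P p := by
  have hk : ∀ k : ℕ, P (L.get ⟨(i0.1 + k) % L.length, Nat.mod_lt _ i0.pos⟩) := by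
    intro k; induction k with
    | zero =>
      have hfe : (⟨(i0.1 + 0) % L.length, Nat.mod_lt _ i0.pos⟩ : Fin L.length) = i0 := by
        apply Fin.ext
        simp [Nat.mod_eq_of_lt i0.2]
      rw [hfe]; exact h0
    | succ k ih =>
      have hstp := hstep _ ih
      have hidx : ((i0.1 + k) % L.length + 1) % L.length = (i0.1 + (k + 1)) % L.length := by
        rw [Nat.mod_add_mod, Nat.add_assoc]
      have hfe : (⟨((i0.1 + k) % L.length + 1) % L.length,
          Nat.mod_lt _ (Fin.pos (⟨(i0.1 + k) % L.length, Nat.mod_lt _ i0.pos⟩ : Fin L.length))⟩ :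
          Fin L.length) = ⟨(i0.1 + (k + 1)) % L.length, Nat.mod_lt _ i0.pos⟩ := Fin.ext hidx
      rw [hfe] at hstp
      exact hstp
  intro p hp
  obtain ⟨jF, hj⟩ := List.mem_iff_get.1 hp
  have hkey := hk (L.length + jF.1 - i0.1)
  have hidx2 : (i0.1 + (L.length + jF.1 - i0.1)) % L.length = jF.1 := by
    have h1 : i0.1 + (L.length + jF.1 - i0.1) = L.length + jF.1 := by
      have := i0.2; omega
    rw [h1, Nat.add_mod_left, Nat.mod_eq_of_lt jF.2]
  have hfe : (⟨(i0.1 + (L.length + jF.1 - i0.1)) % L.length, Nat.mod_lt _ i0.pos⟩ :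
      Fin L.length) = jF := Fin.ext hidx2
  rw [hfe] at hkey
  rw [← hj]; exact hkey

lemma same_man_same_set {X : Fin n ≃ Fin n} {L K : List (Fin n × Fin n)}
    (hL : I.ExposedIn X L) (hK : I.ExposedIn X K) {a : Fin n}
    (haL : a ∈ L.map Prod.fst) (haK : a ∈ K.map Prod.fst) : L.toFinset = K.toFinset := by
  have hsub : ∀ (L K : List (Fin n × Fin n)), I.ExposedIn X L → I.ExposedIn X K →
      a ∈ L.map Prod.fst → a ∈ K.map Prod.fst → ∀ p ∈ L, p ∈ K := by
    intro L K hL hK haL haK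
    obtain ⟨i0, hi0⟩ := hL.pair_of_mem haL
    refine hL.orbit (fun p => p ∈ K) i0 ?_ ?_
    · rw [hi0]
      obtain ⟨j0, hj0⟩ := hK.pair_of_mem haK
      rw [← hj0]; exact List.get_mem _ _
    · intro i hiP
      obtain ⟨j, hj⟩ := List.mem_iff_get.1 hiP
      have s1 := hL.succ_get i
      have s2 := hK.succ_get j
      rw [hj] at s2
      have heq : L.get ⟨(i.1 + 1) % L.length, Nat.mod_lt _ i.pos⟩
          = K.get ⟨(j.1 + 1) % K.length, Nat.mod_lt _ j.pos⟩ :=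
        succ_unique s1 s2 (hL.matched (List.get_mem _ _)) (hK.matched (List.get_mem _ _))
      rw [heq]
      exact List.get_mem _ _
  apply Finset.Subset.antisymm
  · intro p hp
    rw [List.mem_toFinset] at hp ⊢
    exact hsub L K hL hK haL haK p hp
  · intro p hp
    rw [List.mem_toFinset] at hp ⊢
    exact hsub K L hK hL haK haL p hp

lemma exposed_ne_disjoint {X : Fin n ≃ Fin n} {L K : List (Fin n × Fin n)}
    (hL : I.ExposedIn X L) (hK : I.ExposedIn X K) (hne : L.toFinset ≠ K.toFinset) :
    ∀ a ∈ L.map Prod.fst, a ∉ K.map Prod.fst :=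
  fun a haL haK => hne (same_man_same_set hL hK haL haK)

lemma ExposedIn.after_elim {X Y : Fin n ≃ Fin n} {L K : List (Fin n × Fin n)}
    (hK : I.ExposedIn X K) (hE : I.Elim X Y L)
    (hdisj : ∀ a ∈ K.map Prod.fst, a ∉ L.map Prod.fst) : I.ExposedIn Y K := by
  refine ⟨hK.1, hK.2.1, ?_, ?_⟩
  · intro p hp
    rw [hE.not_mem_eq (hdisj p.1 (List.mem_map.2 ⟨p, hp, rfl⟩))]
    exact hK.matched hp
  · intro i
    obtain ⟨c1, c2, c3⟩ := hK.2.2.2 i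
    refine ⟨c1, c2, fun w hw1 hw2 hw3 => ?_⟩
    exact c3 w hw1 hw2 (lt_of_lt_of_le hw3 (hE.symm_le w))

lemma elim_comm {X A B C D : Fin n ≃ Fin n} {L K : List (Fin n × Fin n)}
    (h1 : I.Elim X A L) (h2 : I.Elim A B K) (h3 : I.Elim X C K) (h4 : I.Elim C D L)
    (hdisj : ∀ a ∈ L.map Prod.fst, a ∉ K.map Prod.fst) : B = D := by
  apply Equiv.ext; intro m
  by_cases hmL : m ∈ L.map Prod.fst
  · have hmK : m ∉ K.map Prod.fst := hdisj m hmL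
    obtain ⟨i, hi⟩ := h1.exposed.pair_of_mem hmL
    have e1 := h1.get_eq i
    have e4 := h4.get_eq i
    rw [hi] at e1 e4
    simp only at e1 e4
    rw [h2.not_mem_eq hmK, e1, e4]
  · by_cases hmK : m ∈ K.map Prod.fst
    · have hDm : D m = C m := h4.not_mem_eq hmL
      obtain ⟨j, hj⟩ := h3.exposed.pair_of_mem hmK
      have e2 := h2.get_eq j
      have e3 := h3.get_eq j
      rw [hj] at e2 e3
      simp only at e2 e3
      rw [hDm, e2, e3]
    · rw [h2.not_mem_eq hmK, h1.not_mem_eq hmL, h4.not_mem_eq hmL, h3.not_mem_eq hmK]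

lemma complete_perm {Mz : Fin n ≃ Fin n} (hMz : I.IsWomanOptimal Mz) :
    ∀ (k : ℕ) (X : Fin n ≃ Fin n), I.IsStable X → I.phi Mz - I.phi X = k →
    ∀ Ls Ls', I.ElimSeq X Ls Mz → I.ElimSeq X Ls' Mz →
      (Ls.map List.toFinset).Perm (Ls'.map List.toFinset) := by
  intro k
  induction k using Nat.strong_induction_on with
  | _ k IH =>
    intro X hX hk Ls Ls' h1 h2
    cases Ls with
    | nil =>
      have hXz : Mz = X := h1
      subst hXz
      cases Ls' with
      | nil => exact List.Perm.refl _
      | cons σ B =>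
        obtain ⟨Y, hE, -⟩ := h2
        exact (no_exposed_wopt hMz hE.exposed).elim
    | cons ρ A =>
      obtain ⟨Xρ, hEρ, hsA⟩ := h1
      cases Ls' with
      | nil =>
        have hXz : Mz = X := h2
        subst hXz
        exact (no_exposed_wopt hMz hEρ.exposed).elim
      | cons σ B =>
        obtain ⟨Xσ, hEσ, hsB⟩ := h2
        have hphiρ : I.phi X < I.phi Xρ := hEρ.phi_lt
        have hphiA : I.phi Xρ ≤ I.phi Mz := hsA.phi_le
        by_cases hset : ρ.toFinset = σ.toFinset
        · have heqm : Xρ = Xσ := elim_unique hEρ hEσ hset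
          subst heqm
          have hperm := IH (I.phi Mz - I.phi Xρ) (by omega) Xρ (hEρ.stable hX) rfl A B hsA hsB
          simp only [List.map_cons]
          rw [hset]
          exact hperm.cons _
        · have hdisj : ∀ a ∈ σ.map Prod.fst, a ∉ ρ.map Prod.fst :=
            exposed_ne_disjoint hEσ.exposed hEρ.exposed (fun he => hset he.symm)
          have hdisj' : ∀ a ∈ ρ.map Prod.fst, a ∉ σ.map Prod.fst :=
            fun a ha hb => hdisj a hb ha
          have hσXρ : I.ExposedIn Xρ σ := hEσ.exposed.after_elim hEρ hdisj
          have hρXσ : I.ExposedIn Xσ ρ := hEρ.exposed.after_elim hEσ hdisj'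
          obtain ⟨Z1, hZ1⟩ := elim_exists hσXρ
          obtain ⟨Z2, hZ2⟩ := elim_exists hρXσ
          have hZeq : Z1 = Z2 := elim_comm hEρ hZ1 hEσ hZ2 hdisj'
          have hZs : I.IsStable Z1 := hZ1.stable (hEρ.stable hX)
          obtain ⟨C, hC⟩ := reach hZs hMz.1 (hMz.2 _ hZs)
          have p1 := IH (I.phi Mz - I.phi Xρ) (by omega) Xρ (hEρ.stable hX) rfl
            A (σ :: C) hsA ⟨Z1, hZ1, hC⟩
          have hphiσ : I.phi X < I.phi Xσ := hEσ.phi_lt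
          have hphiB : I.phi Xσ ≤ I.phi Mz := hsB.phi_le
          have p2 := IH (I.phi Mz - I.phi Xσ) (by omega) Xσ (hEσ.stable hX) rfl
            B (ρ :: C) hsB ⟨Z2, hZ2, hZeq ▸ hC⟩
          simp only [List.map_cons] at p1 p2 ⊢
          exact (p1.cons ρ.toFinset).trans
            ((List.Perm.swap σ.toFinset ρ.toFinset (C.map List.toFinset)).trans
              ((p2.symm).cons σ.toFinset))

/-- any two elimination sequences between the same stable endpoints use the same
rotations (as a multiset of pair-sets) -/
lemma path_perm {Mz X Y : Fin n ≃ Fin n} (hMz : I.IsWomanOptimal Mz) (hX : I.IsStable X)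
    {u v : List (List (Fin n × Fin n))} (hu : I.ElimSeq X u Y) (hv : I.ElimSeq X v Y) :
    (u.map List.toFinset).Perm (v.map List.toFinset) := by
  have hY : I.IsStable Y := hu.stable hX
  obtain ⟨W, hW⟩ := reach hY hMz.1 (hMz.2 _ hY)
  have h1 := complete_perm hMz (I.phi Mz - I.phi X) X hX rfl (u ++ W) (v ++ W)
    (hu.append hW) (hv.append hW)
  rw [List.map_append, List.map_append] at h1
  rw [← Multiset.coe_eq_coe] at h1 ⊢
  simp only [← Multiset.coe_add] at h1
  exact add_right_cancel h1

/-- every rotation is used in every complete elimination sequence -/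
lemma rot_mem_complete {M₀ Mz : Fin n ≃ Fin n} (hM₀ : I.IsManOptimal M₀)
    (hMz : I.IsWomanOptimal Mz) {ρ : List (Fin n × Fin n)} (hρ : I.IsRotation ρ)
    {Ls : List (List (Fin n × Fin n))} (h : I.ElimSeq M₀ Ls Mz) :
    ρ.toFinset ∈ Ls.map List.toFinset := by
  obtain ⟨M1, hM1s, hexp⟩ := hρ
  obtain ⟨u, hu⟩ := reach hM₀.1 hM1s (hM₀.2 _ hM1s)
  obtain ⟨Y, hE⟩ := elim_exists hexp
  have hYs := hE.stable hM1s
  obtain ⟨v, hv⟩ := reach hYs hMz.1 (hMz.2 _ hYs)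
  have hfull : I.ElimSeq M₀ (u ++ ρ :: v) Mz := hu.append ⟨Y, hE, hv⟩
  have hperm := path_perm hMz hM₀.1 hfull h
  exact hperm.mem_iff.1 (by simp)

/-- characterization: rotation `ρ ∋ (a,b)` is used on the way from `M₀` to stable `X`
iff `a` is matched strictly below `b` in `X` -/
lemma mem_iff_lt {M₀ Mz : Fin n ≃ Fin n} (hM₀ : I.IsManOptimal M₀)
    (hMz : I.IsWomanOptimal Mz) {ρ : List (Fin n × Fin n)} (hρ : I.IsRotation ρ)
    {a b : Fin n} (hab : (a, b) ∈ ρ) {X : Fin n ≃ Fin n} (hX : I.IsStable X)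
    {Ls : List (List (Fin n × Fin n))} (hLs : I.ElimSeq M₀ Ls X) :
    ρ.toFinset ∈ Ls.map List.toFinset ↔ I.mrank a b < I.mrank a (X a) := by
  constructor
  · intro hmem
    obtain ⟨K, hKLs, hKset⟩ := List.mem_map.1 hmem
    obtain ⟨u, v, X1, X2, -, hu, hKe, hv⟩ := hLs.mem_split hKLs
    have habK : (a, b) ∈ K := by
      rw [← List.mem_toFinset, hKset, List.mem_toFinset]; exact hab
    have hX1 : X1 a = b := hKe.exposed.matched habK
    have hfst : a ∈ K.map Prod.fst := List.mem_map.2 ⟨(a, b), habK, rfl⟩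
    have h1 : I.mrank a (X1 a) < I.mrank a (X2 a) := hKe.lt_of_mem hfst
    have h2 : I.mrank a (X2 a) ≤ I.mrank a (X a) := hv.le a
    rw [hX1] at h1; omega
  · intro hlt
    by_contra hmem
    obtain ⟨W, hW⟩ := reach (hLs.stable hM₀.1) hMz.1 (hMz.2 _ (hLs.stable hM₀.1))
    have hfull := hLs.append hW
    have hmemf := rot_mem_complete hM₀ hMz hρ hfull
    rw [List.map_append, List.mem_append] at hmemf
    rcases hmemf with h | h
    · exact hmem h
    · obtain ⟨K, hKW, hKset⟩ := List.mem_map.1 h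
      obtain ⟨u, v, X1, X2, -, hu, hKe, -⟩ := hW.mem_split hKW
      have habK : (a, b) ∈ K := by
        rw [← List.mem_toFinset, hKset, List.mem_toFinset]; exact hab
      have hX1 : X1 a = b := hKe.exposed.matched habK
      have hle : I.mrank a (X a) ≤ I.mrank a (X1 a) := hu.le a
      rw [hX1] at hle; omega

end SMInst
namespace SMInst

variable {n : ℕ} {I : SMInst n} {A B P : Fin n ≃ Fin n}

private lemma join_key (hA : I.IsStable A) (hB : I.IsStable B) {m1 m2 : Fin n}
    (hne : m1 ≠ m2) (h1 : I.mrank m1 (A m1) ≤ I.mrank m1 (B m1))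
    (h2 : ¬ I.mrank m2 (A m2) ≤ I.mrank m2 (B m2)) (heq : A m1 = B m2) : False := by
  set w := A m1 with hw
  have hBm2 : B m2 = w := heq.symm
  rcases lt_trichotomy (I.wrank w m1) (I.wrank w m2) with hcase | hcase | hcase
  · apply hB m1 w
    constructor
    · rcases lt_or_eq_of_le h1 with h | h
      · exact hw ▸ h
      · exfalso
        have hAB : A m1 = B m1 := I.mrank_inj m1 h
        have hb : B m2 = B m1 := by rw [hBm2, hw, hAB]
        exact hne (B.injective hb).symm
    · have hBs : B.symm w = m2 := by rw [← hBm2, Equiv.symm_apply_apply]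
      rw [hBs]; exact hcase
  · exact hne (I.wrank_inj w hcase)
  · apply hA m2 w
    constructor
    · have hlt : I.mrank m2 (B m2) < I.mrank m2 (A m2) := not_le.1 h2
      rw [hBm2] at hlt; exact hlt
    · have hAs : A.symm w = m1 := by rw [hw, Equiv.symm_apply_apply]
      rw [hAs]; exact hcase

lemma join_exists (hA : I.IsStable A) (hB : I.IsStable B) :
    ∃ P : Fin n ≃ Fin n,
      ∀ m, P m = if I.mrank m (A m) ≤ I.mrank m (B m) then A m else B m := by
  classical
  set f : Fin n → Fin n :=
    fun m => if I.mrank m (A m) ≤ I.mrank m (B m) then A m else B m with hf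
  have hinj : Function.Injective f := by
    intro m1 m2 heq
    by_contra hne
    by_cases h1 : I.mrank m1 (A m1) ≤ I.mrank m1 (B m1) <;>
      by_cases h2 : I.mrank m2 (A m2) ≤ I.mrank m2 (B m2)
    · rw [hf] at heq; simp only [if_pos h1, if_pos h2] at heq
      exact hne (A.injective heq)
    · rw [hf] at heq; simp only [if_pos h1, if_neg h2] at heq
      exact join_key hA hB hne h1 h2 heq
    · rw [hf] at heq; simp only [if_neg h1, if_pos h2] at heq
      exact join_key hA hB (Ne.symm hne) h2 h1 heq.symm
    · rw [hf] at heq; simp only [if_neg h1, if_neg h2] at heq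
      exact hne (B.injective heq)
  exact ⟨Equiv.ofBijective f (Finite.injective_iff_bijective.1 hinj), fun m => rfl⟩

lemma join_dom_left (hP : ∀ m, P m = if I.mrank m (A m) ≤ I.mrank m (B m) then A m else B m) :
    I.Dominates P A := by
  intro m; rw [hP m]
  split
  · exact le_refl _
  · exact le_of_lt (not_le.1 (by assumption))

lemma join_dom_right (hP : ∀ m, P m = if I.mrank m (A m) ≤ I.mrank m (B m) then A m else B m) :
    I.Dominates P B := by
  intro m; rw [hP m]
  split
  · assumption
  · exact le_refl _

lemma branch_symm_mem
    (hP : ∀ m, P m = if I.mrank m (A m) ≤ I.mrank m (B m) then A m else B m) (w' : Fin n) :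
    P.symm w' = A.symm w' ∨ P.symm w' = B.symm w' := by
  have h := Equiv.apply_symm_apply P w'
  rw [hP] at h
  split at h
  · left; conv_rhs => rw [← h, Equiv.symm_apply_apply]
  · right; conv_rhs => rw [← h, Equiv.symm_apply_apply]

lemma join_stable (hA : I.IsStable A) (hB : I.IsStable B)
    (hP : ∀ m, P m = if I.mrank m (A m) ≤ I.mrank m (B m) then A m else B m) :
    I.IsStable P := by
  rintro m w' ⟨hb1, hb2⟩
  rcases branch_symm_mem hP w' with hs | hs
  · exact hA m w' ⟨lt_of_lt_of_le hb1 (join_dom_left hP m), hs ▸ hb2⟩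
  · exact hB m w' ⟨lt_of_lt_of_le hb1 (join_dom_right hP m), hs ▸ hb2⟩

lemma join_exposed
    (hP : ∀ m, P m = if I.mrank m (A m) ≤ I.mrank m (B m) then A m else B m)
    {L : List (Fin n × Fin n)} (heA : I.ExposedIn A L) (heB : I.ExposedIn B L) :
    I.ExposedIn P L := by
  refine ⟨heA.1, heA.2.1, ?_, ?_⟩
  · intro p hp
    rw [hP p.1, heA.matched hp, heB.matched hp, ite_self]
  · intro i
    obtain ⟨c1, c2, c3⟩ := heA.2.2.2 i
    obtain ⟨-, -, d3⟩ := heB.2.2.2 i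
    refine ⟨c1, c2, fun w hw1 hw2 hw3 => ?_⟩
    rcases branch_symm_mem hP w with hs | hs
    · exact c3 w hw1 hw2 (hs ▸ hw3)
    · exact d3 w hw1 hw2 (hs ▸ hw3)

lemma meet_exists (hA : I.IsStable A) (hB : I.IsStable B) :
    ∃ P : Fin n ≃ Fin n,
      ∀ m, P m = if I.mrank m (A m) ≤ I.mrank m (B m) then B m else A m := by
  classical
  set f : Fin n → Fin n :=
    fun m => if I.mrank m (A m) ≤ I.mrank m (B m) then B m else A m with hf
  have hsurj : Function.Surjective f := by
    intro w
    set x := A.symm w with hx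
    set y := B.symm w with hy
    have hAx : A x = w := Equiv.apply_symm_apply _ _
    have hBy : B y = w := Equiv.apply_symm_apply _ _
    by_cases hxy : x = y
    · refine ⟨x, ?_⟩
      rw [hf]; simp only
      split
      · rw [hxy, hBy]
      · exact hAx
    · by_cases hfx : I.mrank x (A x) ≤ I.mrank x (B x)
      · by_cases hfy : I.mrank y (A y) ≤ I.mrank y (B y)
        · refine ⟨y, ?_⟩
          rw [hf]; simp only
          rw [if_pos hfy]; exact hBy
        · exfalso
          have hyw : I.mrank y (B y) < I.mrank y (A y) := not_le.1 hfy
          rw [hBy] at hyw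
          rcases lt_trichotomy (I.wrank w y) (I.wrank w x) with hc | hc | hc
          · refine hA y w ⟨hyw, ?_⟩
            rw [← hx]
            exact hc
          · exact hxy (I.wrank_inj w hc).symm
          · apply hB x w
            constructor
            · rw [hAx] at hfx
              rcases lt_or_eq_of_le hfx with h | h
              · exact h
              · exfalso
                have hwB : w = B x := I.mrank_inj x h
                apply hxy
                rw [hy, hwB, Equiv.symm_apply_apply]
            · rw [← hy]
              exact hc
      · refine ⟨x, ?_⟩
        rw [hf]; simp only
        rw [if_neg hfx]; exact hAx
  exact ⟨Equiv.ofBijective f (Finite.surjective_iff_bijective.1 hsurj), fun m => rfl⟩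

lemma meet_dom_left (hP : ∀ m, P m = if I.mrank m (A m) ≤ I.mrank m (B m) then B m else A m) :
    I.Dominates A P := by
  intro m; rw [hP m]
  split
  · assumption
  · exact le_refl _

lemma meet_dom_right (hP : ∀ m, P m = if I.mrank m (A m) ≤ I.mrank m (B m) then B m else A m) :
    I.Dominates B P := by
  intro m; rw [hP m]
  split
  · exact le_refl _
  · exact le_of_lt (not_le.1 (by assumption))

lemma meet_symm_mem
    (hP : ∀ m, P m = if I.mrank m (A m) ≤ I.mrank m (B m) then B m else A m) (w' : Fin n) :
    P.symm w' = A.symm w' ∨ P.symm w' = B.symm w' := by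
  have h := Equiv.apply_symm_apply P w'
  rw [hP] at h
  split at h
  · right; conv_rhs => rw [← h, Equiv.symm_apply_apply]
  · left; conv_rhs => rw [← h, Equiv.symm_apply_apply]

lemma meet_symm_le (hA : I.IsStable A) (hB : I.IsStable B)
    (hP : ∀ m, P m = if I.mrank m (A m) ≤ I.mrank m (B m) then B m else A m) (w : Fin n) :
    I.wrank w (P.symm w) ≤ I.wrank w (A.symm w) ∧
      I.wrank w (P.symm w) ≤ I.wrank w (B.symm w) := by
  rcases meet_symm_mem hP w with hcs | hcs
  · refine ⟨le_of_eq (congrArg _ hcs), ?_⟩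
    rw [hcs]
    by_cases hxy : A.symm w = B.symm w
    · rw [hxy]
    · by_contra hcon
      push_neg at hcon
      have hPy : P (B.symm w) ≠ w := by
        intro hPyw
        apply hxy
        rw [← hcs]
        exact (Equiv.symm_apply_eq P).2 hPyw.symm
      have hyP := hP (B.symm w)
      by_cases hcond : I.mrank (B.symm w) (A (B.symm w)) ≤ I.mrank (B.symm w) (B (B.symm w))
      · rw [if_pos hcond, Equiv.apply_symm_apply] at hyP
        exact hPy hyP
      · have hyw : I.mrank (B.symm w) w < I.mrank (B.symm w) (A (B.symm w)) := by
          have hlt := not_le.1 hcond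
          rwa [Equiv.apply_symm_apply] at hlt
        exact hA (B.symm w) w ⟨hyw, hcon⟩
  · refine ⟨?_, le_of_eq (congrArg _ hcs)⟩
    rw [hcs]
    by_cases hxy : A.symm w = B.symm w
    · rw [← hxy]
    · by_contra hcon
      push_neg at hcon
      have hPx : P (A.symm w) ≠ w := by
        intro hPxw
        apply hxy
        rw [← hcs]
        exact ((Equiv.symm_apply_eq P).2 hPxw.symm).symm
      have hxP := hP (A.symm w)
      by_cases hcond : I.mrank (A.symm w) (A (A.symm w)) ≤ I.mrank (A.symm w) (B (A.symm w))
      · have hcond' : I.mrank (A.symm w) w ≤ I.mrank (A.symm w) (B (A.symm w)) := by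
          rwa [Equiv.apply_symm_apply] at hcond
        have hlt : I.mrank (A.symm w) w < I.mrank (A.symm w) (B (A.symm w)) := by
          rcases lt_or_eq_of_le hcond' with h | h
          · exact h
          · exfalso
            have hwB : w = B (A.symm w) := I.mrank_inj _ h
            apply hPx
            rw [hxP, if_pos hcond, ← hwB]
        exact hB (A.symm w) w ⟨hlt, hcon⟩
      · rw [if_neg hcond, Equiv.apply_symm_apply] at hxP
        exact hPx hxP

lemma meet_stable (hA : I.IsStable A) (hB : I.IsStable B)
    (hP : ∀ m, P m = if I.mrank m (A m) ≤ I.mrank m (B m) then B m else A m) :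
    I.IsStable P := by
  rintro m w' ⟨hb1, hb2⟩
  have hsym := meet_symm_le hA hB hP w'
  rw [hP] at hb1
  split at hb1
  · exact hB m w' ⟨hb1, lt_of_lt_of_le hb2 hsym.2⟩
  · exact hA m w' ⟨hb1, lt_of_lt_of_le hb2 hsym.1⟩

end SMInst
namespace SMInst

variable {n : ℕ} {I : SMInst n}

lemma manopt_unique {M₀ M₀' : Fin n ≃ Fin n} (h1 : I.IsManOptimal M₀)
    (h2 : I.IsManOptimal M₀') : M₀' = M₀ := by
  apply Equiv.ext; intro m
  exact I.mrank_inj m (le_antisymm (h2.2 _ h1.1 m) (h1.2 _ h2.1 m))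

lemma joinAll {Le : List (Fin n × Fin n)} :
    ∀ (l : List (Fin n ≃ Fin n)) (M1 : Fin n ≃ Fin n),
      I.IsStable M1 → I.ExposedIn M1 Le →
      (∀ X ∈ l, I.IsStable X ∧ I.ExposedIn X Le) →
      ∃ ME, I.IsStable ME ∧ I.ExposedIn ME Le ∧ I.Dominates ME M1 ∧
        ∀ X ∈ l, I.Dominates ME X := by
  intro l
  induction l with
  | nil =>
    intro M1 h1 h2 _
    exact ⟨M1, h1, h2, fun m => le_refl _, by simp⟩
  | cons X xs ih =>
    intro M1 h1 h2 hl
    obtain ⟨ME', hs', he', hd1', hds'⟩ := ih M1 h1 h2 (fun Y hY => hl Y (List.mem_cons_of_mem _ hY))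
    have hXs := (hl X (List.mem_cons_self)).1
    have hXe := (hl X (List.mem_cons_self)).2
    obtain ⟨P, hP⟩ := join_exists hs' hXs
    refine ⟨P, join_stable hs' hXs hP, join_exposed hP he' hXe, ?_, ?_⟩
    · intro m; exact le_trans (join_dom_left hP m) (hd1' m)
    · intro Y hY
      rcases List.mem_cons.1 hY with rfl | hY'
      · exact join_dom_right hP
      · intro m; exact le_trans (join_dom_left hP m) (hds' Y hY' m)

/-- the dominant stable matching exposing a given rotation -/
lemma ME_exists {Le : List (Fin n × Fin n)} (hLe : I.IsRotation Le) :
    ∃ ME, I.IsStable ME ∧ I.ExposedIn ME Le ∧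
      ∀ X, I.IsStable X → I.ExposedIn X Le → I.Dominates ME X := by
  classical
  obtain ⟨M1, h1, h2⟩ := hLe
  obtain ⟨ME, hs, he, hd1, hds⟩ := joinAll
    ((Finset.univ.filter (fun X : Fin n ≃ Fin n => I.IsStable X ∧ I.ExposedIn X Le)).toList)
    M1 h1 h2 (by
      intro X hX
      rw [Finset.mem_toList, Finset.mem_filter] at hX
      exact hX.2)
  refine ⟨ME, hs, he, fun X hXs hXe => ?_⟩
  apply hds
  rw [Finset.mem_toList, Finset.mem_filter]
  exact ⟨Finset.mem_univ _, hXs, hXe⟩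

end SMInst
open SMInst in
/-- adding to `S` the rotation eliminating `(m, w)` together with its
missing predecessors yields a closed subset `S↓` whose stable matching avoids `(m, w)`
and is dominated by `M`. -/
theorem down_repair_is_closed_and_dominated {n : ℕ} (I : SMInst n)
    (M₀ Mz M : Fin n ≃ Fin n) (hM₀ : I.IsManOptimal M₀) (hMz : I.IsWomanOptimal Mz)
    (hM : I.IsStable M)
    (S : Finset (Finset (Fin n × Fin n))) (hS : I.IsClosedF S)
    (hc : I.Corresponds M₀ S M) (m w : Fin n) (hmw : M m = w) (hz : Mz m ≠ w)
    (Le : List (Fin n × Fin n)) (hLe : I.IsRotation Le) (helim : (m, w) ∈ Le)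
    (Sdn : Finset (Finset (Fin n × Fin n)))
    (hSdn : ∀ R, R ∈ Sdn ↔ R ∈ S ∨ R = Le.toFinset ∨ I.PrecedesR R Le.toFinset) :
    I.IsClosedF Sdn ∧
    ∃ Md : Fin n ≃ Fin n, I.IsStable Md ∧ I.Corresponds M₀ Sdn Md ∧
      Md m ≠ w ∧ I.Dominates M Md := by
  classical
  obtain ⟨Ls₀, hLs₀nd, hLs₀set, hLs₀seq⟩ := hc
  have hSmem : ∀ R, R ∈ S ↔ R ∈ Ls₀.map List.toFinset := by
    intro R; rw [← hLs₀set, List.mem_toFinset]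
  obtain ⟨ME, hMEs, hMEe, hMEdom⟩ := ME_exists (I := I) hLe
  -- Le is not used on the way to M
  have hLe_not_S : Le.toFinset ∉ Ls₀.map List.toFinset := by
    intro hmem
    have hlt := (mem_iff_lt hM₀ hMz hLe helim hM hLs₀seq).1 hmem
    rw [hmw] at hlt
    exact lt_irrefl _ hlt
  -- in M every man of Le is matched weakly above his Le-woman
  have hMweak : ∀ p : Fin n × Fin n, p ∈ Le → I.mrank p.1 (M p.1) ≤ I.mrank p.1 p.2 := by
    intro p hp
    by_contra hcon
    push_neg at hcon
    have hp' : ((p.1, p.2) : Fin n × Fin n) ∈ Le := by simpa using hp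
    exact hLe_not_S ((mem_iff_lt hM₀ hMz hLe hp' hM hLs₀seq).2 hcon)
  -- Mt = meet of M and ME
  obtain ⟨Mt, hMt⟩ := meet_exists hM hMEs
  have hMts : I.IsStable Mt := meet_stable hM hMEs hMt
  have hMdomMt : I.Dominates M Mt := meet_dom_left hMt
  have hMEdomMt : I.Dominates ME Mt := meet_dom_right hMt
  -- Le is exposed in Mt
  have hMtLe : I.ExposedIn Mt Le := by
    refine ⟨hMEe.1, hMEe.2.1, ?_, ?_⟩
    · intro p hp
      rw [hMt p.1]
      have hMEp := hMEe.matched hp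
      split
      · exact hMEp
      · rename_i hcond
        push_neg at hcond
        have hwk := hMweak p hp
        rw [← hMEp] at hwk
        exact absurd hcond (not_lt.2 hwk)
    · intro i
      obtain ⟨c1, c2, c3⟩ := hMEe.2.2.2 i
      refine ⟨c1, c2, fun w' hw1 hw2 hw3 => ?_⟩
      apply c3 w' hw1 hw2
      exact lt_of_lt_of_le hw3 (meet_symm_le hM hMEs hMt w').2
  -- a path E from M down to Mt, and the elimination of Le at Mt
  obtain ⟨E, hE⟩ := reach hM hMts hMdomMt
  obtain ⟨Md, hMdE⟩ := elim_exists hMtLe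
  have hMds : I.IsStable Md := hMdE.stable hMts
  have hfullE : I.ElimSeq M₀ (Ls₀ ++ E) Mt := hLs₀seq.append hE
  have hfull : I.ElimSeq M₀ (Ls₀ ++ E ++ [Le]) Md := hfullE.append ⟨Md, hMdE, rfl⟩
  have hnodup : ((Ls₀ ++ E ++ [Le]).map List.toFinset).Nodup := hfull.sets_nodup
  obtain ⟨uME, huME⟩ := reach hM₀.1 hMEs (hM₀.2 _ hMEs)
  -- every rotation of E is used on every path from M₀ to ME
  have hKinME : ∀ K ∈ E, K.toFinset ∈ uME.map List.toFinset := by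
    intro K hK
    have hKrot : I.IsRotation K := ElimSeq.isRotation hM hE hK
    obtain ⟨u, v, X1, X2, -, hu, hKe, hv⟩ := hE.mem_split hK
    have hp0 : K.get ⟨0, hKe.exposed.pos⟩ ∈ K := List.get_mem _ _
    set p := K.get ⟨0, hKe.exposed.pos⟩ with hpdef
    have hp0' : ((p.1, p.2) : Fin n × Fin n) ∈ K := by simpa using hp0
    have hX1p : X1 p.1 = p.2 := hKe.exposed.matched hp0
    have hlt1 : I.mrank p.1 p.2 < I.mrank p.1 (Mt p.1) := by
      have h1 : I.mrank p.1 (X1 p.1) < I.mrank p.1 (X2 p.1) :=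
        hKe.lt_of_mem (List.mem_map.2 ⟨p, hp0, rfl⟩)
      have h2 : I.mrank p.1 (X2 p.1) ≤ I.mrank p.1 (Mt p.1) := hv.le p.1
      rw [hX1p] at h1; omega
    have hKnotS : K.toFinset ∉ Ls₀.map List.toFinset := by
      intro hmem
      have hnd2 : (Ls₀.map List.toFinset ++ E.map List.toFinset).Nodup := by
        have hcopy := hnodup
        rw [List.map_append, List.map_append] at hcopy
        exact hcopy.of_append_left
      have hdisj := List.disjoint_of_nodup_append hnd2
      exact hdisj hmem (List.mem_map.2 ⟨K, hK, rfl⟩)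
    have hnotM : ¬ I.mrank p.1 p.2 < I.mrank p.1 (M p.1) := by
      intro hcon
      exact hKnotS ((mem_iff_lt hM₀ hMz hKrot hp0' hM hLs₀seq).2 hcon)
    have hltME : I.mrank p.1 p.2 < I.mrank p.1 (ME p.1) := by
      have hMtp := hMt p.1
      by_cases hcond : I.mrank p.1 (M p.1) ≤ I.mrank p.1 (ME p.1)
      · rw [if_pos hcond] at hMtp; rw [hMtp] at hlt1; exact hlt1
      · rw [if_neg hcond] at hMtp; rw [hMtp] at hlt1; exact absurd hlt1 hnotM
    exact (mem_iff_lt hM₀ hMz hKrot hp0' hMEs huME).2 hltME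
  -- hence every rotation of E precedes Le
  have hKprecedes : ∀ K ∈ E, I.Precedes K Le := by
    intro K hK M₀' Ls' M'' hM₀' hseq' hM''s hexp''
    have hM₀eq : M₀' = M₀ := manopt_unique hM₀ hM₀'
    rw [hM₀eq] at hseq'
    have hdom'' : I.Dominates ME M'' := hMEdom M'' hM''s hexp''
    obtain ⟨w'', hw''⟩ := reach hMEs hM''s hdom''
    have hpath : I.ElimSeq M₀ (uME ++ w'') M'' := huME.append hw''
    have hperm := path_perm hMz hM₀.1 hpath hseq'
    have hmem : K.toFinset ∈ Ls'.map List.toFinset := by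
      apply hperm.mem_iff.1
      rw [List.map_append, List.mem_append]
      left; exact hKinME K hK
    obtain ⟨K', hK', hK's⟩ := List.mem_map.1 hmem
    exact ⟨K', hK', hK's⟩
  -- the set of the constructed sequence is Sdn
  have hSdn_eq : ∀ R, R ∈ Sdn ↔ R ∈ (Ls₀ ++ E ++ [Le]).map List.toFinset := by
    intro R
    rw [hSdn R]
    constructor
    · rintro (hRS | rfl | hRp)
      · rw [List.map_append, List.mem_append, List.map_append, List.mem_append]
        exact Or.inl (Or.inl ((hSmem R).1 hRS))
      · rw [List.map_append, List.mem_append]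
        exact Or.inr (by simp)
      · obtain ⟨L', L'', rotL', rotL'', hsL', hsL'', hprec⟩ := hRp
        obtain ⟨Y'', hY''s, hY''e⟩ := rotL''
        have hexpL'' : I.ExposedIn Mt L'' := exposed_transfer hMtLe hY''e hsL''.symm
        obtain ⟨K, hKmem, hKset⟩ := hprec M₀ (Ls₀ ++ E) Mt hM₀ hfullE hMts hexpL''
        rw [List.map_append, List.mem_append]
        left
        exact List.mem_map.2 ⟨K, hKmem, by rw [hKset, hsL']⟩
    · intro hmem
      rw [List.map_append, List.mem_append, List.map_append, List.mem_append] at hmem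
      rcases hmem with (h | h) | h
      · exact Or.inl ((hSmem R).2 h)
      · obtain ⟨K, hK, hKs⟩ := List.mem_map.1 h
        refine Or.inr (Or.inr ?_)
        exact ⟨K, Le, ElimSeq.isRotation hM hE hK, hLe, hKs, rfl, hKprecedes K hK⟩
      · simp only [List.map_cons, List.map_nil, List.mem_singleton] at h
        exact Or.inr (Or.inl h)
  constructor
  · -- closedness of Sdn
    constructor
    · intro R hR
      rcases (hSdn R).1 hR with hRS | rfl | hRp
      · exact hS.1 R hRS
      · exact ⟨Le, hLe, rfl⟩
      · obtain ⟨L', L'', rotL', -, hsL', -, -⟩ := hRp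
        exact ⟨L', rotL', hsL'⟩
    · intro R hR R' hR'rot hprec
      rw [hSdn R']
      rcases (hSdn R).1 hR with hRS | rfl | hRp
      · exact Or.inl (hS.2 R hRS R' hR'rot hprec)
      · exact Or.inr (Or.inr hprec)
      · refine Or.inr (Or.inr ?_)
        obtain ⟨La, Lb, rotLa, rotLb, hsLa, hsLb, hPab⟩ := hprec
        obtain ⟨Lc, Ld, rotLc, rotLd, hsLc, hsLd, hPcd⟩ := hRp
        refine ⟨La, Le, rotLa, hLe, hsLa, rfl, ?_⟩
        intro M₀' Ls' M'' hM₀' hseq' hM''s hexp''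
        have hM₀eq : M₀' = M₀ := manopt_unique hM₀ hM₀'
        rw [hM₀eq] at hseq'
        obtain ⟨Yd, hYds, hYde⟩ := rotLd
        have hexpd : I.ExposedIn M'' Ld := exposed_transfer hexp'' hYde hsLd.symm
        obtain ⟨K, hKmem, hKset⟩ := hPcd M₀ Ls' M'' hM₀ hseq' hM''s hexpd
        obtain ⟨u, v, X1, X2, hsplit, hu, hKe, -⟩ := hseq'.mem_split hKmem
        have hX1s : I.IsStable X1 := hu.stable hM₀.1
        obtain ⟨Yb, hYbs, hYbe⟩ := rotLb
        have hexpb : I.ExposedIn X1 Lb :=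
          exposed_transfer hKe.exposed hYbe (by rw [hKset, hsLc, ← hsLb])
        obtain ⟨K', hK'mem, hK'set⟩ := hPab M₀ u X1 hM₀ hu hX1s hexpb
        refine ⟨K', ?_, by rw [hK'set, hsLa]⟩
        rw [hsplit]
        exact List.mem_append.2 (Or.inl hK'mem)
  · -- the matching Md
    refine ⟨Md, hMds, ⟨Ls₀ ++ E ++ [Le], hnodup, ?_, hfull⟩, ?_, ?_⟩
    · apply Finset.ext
      intro R
      rw [List.mem_toFinset]
      exact (hSdn_eq R).symm
    · -- Md m ≠ w
      obtain ⟨iL, hiL⟩ := List.mem_iff_get.1 helim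
      have hgeq := hMdE.get_eq iL
      rw [hiL] at hgeq
      simp only at hgeq
      have hcond1 := (hMtLe.succ_get iL).2.1
      rw [hiL] at hcond1
      simp only at hcond1
      intro hcon
      rw [hgeq] at hcon
      rw [hcon] at hcond1
      exact lt_irrefl _ hcond1
    · -- Dominates M Md
      have hEle : I.ElimSeq M (E ++ [Le]) Md := hE.append ⟨Md, hMdE, rfl⟩
      exact fun m' => hEle.le m'
end

section
/- Minimality of M↓ among dominated repairs: let M be a stable matching with closed subset S and (m,w) ∈ M with eliminating rotation ρ_e, and let M↓ be the stable matching of the closed subset S↓ = S ∪ {ρ_e} ∪ (pred(ρ_e) \ S). If Mx is any stable matching not containing (m,w) that is dominated by M and differs from M↓, then M↓ dominates Mx; i.e., there is no stable matching strictly between M and M↓ avoiding the pair (m,w). -/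
namespace SMInst

open List Finset

variable {n : ℕ}

/-- successor index in a cyclic list -/
def nx {α : Type*} {L : List α} (i : Fin L.length) : Fin L.length :=
  ⟨(i.1 + 1) % L.length, Nat.mod_lt _ i.pos⟩

theorem exp_len {I : SMInst n} {M : Fin n ≃ Fin n} {L : List (Fin n × Fin n)}
    (h : I.ExposedIn M L) : 2 ≤ L.length := h.1

theorem exp_nodup {I : SMInst n} {M : Fin n ≃ Fin n} {L : List (Fin n × Fin n)}
    (h : I.ExposedIn M L) : (L.map Prod.fst).Nodup := h.2.1

theorem exp_matched {I : SMInst n} {M : Fin n ≃ Fin n} {L : List (Fin n × Fin n)}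
    (h : I.ExposedIn M L) : ∀ p ∈ L, M p.1 = p.2 := h.2.2.1

theorem exp_b1 {I : SMInst n} {M : Fin n ≃ Fin n} {L : List (Fin n × Fin n)}
    (h : I.ExposedIn M L) (i : Fin L.length) :
    I.mrank (L.get i).1 (L.get i).2 < I.mrank (L.get i).1 (L.get (nx i)).2 :=
  (h.2.2.2 i).1

theorem exp_b2 {I : SMInst n} {M : Fin n ≃ Fin n} {L : List (Fin n × Fin n)}
    (h : I.ExposedIn M L) (i : Fin L.length) :
    I.wrank (L.get (nx i)).2 (L.get i).1 < I.wrank (L.get (nx i)).2 (L.get (nx i)).1 :=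
  (h.2.2.2 i).2.1

theorem exp_b3 {I : SMInst n} {M : Fin n ≃ Fin n} {L : List (Fin n × Fin n)}
    (h : I.ExposedIn M L) (i : Fin L.length) :
    ∀ w, I.mrank (L.get i).1 (L.get i).2 < I.mrank (L.get i).1 w →
      I.mrank (L.get i).1 w < I.mrank (L.get i).1 (L.get (nx i)).2 →
      ¬ I.wrank w (L.get i).1 < I.wrank w (M.symm w) :=
  (h.2.2.2 i).2.2

theorem elim_exp {I : SMInst n} {M M' : Fin n ≃ Fin n} {L : List (Fin n × Fin n)}
    (h : I.Elim M M' L) : I.ExposedIn M L := h.1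

theorem elim_move {I : SMInst n} {M M' : Fin n ≃ Fin n} {L : List (Fin n × Fin n)}
    (h : I.Elim M M' L) (i : Fin L.length) : M' (L.get i).1 = (L.get (nx i)).2 :=
  h.2.1 i

theorem elim_frozen {I : SMInst n} {M M' : Fin n ≃ Fin n} {L : List (Fin n × Fin n)}
    (h : I.Elim M M' L) : ∀ m : Fin n, m ∉ L.map Prod.fst → M' m = M m := h.2.2

theorem elimSeq_nil {I : SMInst n} {M M' : Fin n ≃ Fin n} :
    I.ElimSeq M [] M' ↔ M' = M := Iff.rfl

theorem elimSeq_cons {I : SMInst n} {M M' : Fin n ≃ Fin n} {L : List (Fin n × Fin n)}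
    {Ls : List (List (Fin n × Fin n))} :
    I.ElimSeq M (L :: Ls) M' ↔ ∃ Mmid, I.Elim M Mmid L ∧ I.ElimSeq Mmid Ls M' := Iff.rfl

/-- membership of a man as first coordinate -/
theorem mem_fst_iff {L : List (Fin n × Fin n)} {a : Fin n} :
    a ∈ L.map Prod.fst ↔ ∃ i : Fin L.length, (L.get i).1 = a := by
  rw [List.mem_map]
  constructor
  · rintro ⟨p, hp, rfl⟩
    obtain ⟨i, rfl⟩ := List.mem_iff_get.mp hp
    exact ⟨i, rfl⟩
  · rintro ⟨i, rfl⟩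
    exact ⟨L.get i, List.get_mem L i, rfl⟩

theorem fst_inj {L : List (Fin n × Fin n)} (hnd : (L.map Prod.fst).Nodup)
    {i j : Fin L.length} (h : (L.get i).1 = (L.get j).1) : i = j := by
  have hlen : (L.map Prod.fst).length = L.length := by simp
  have h1 : (L.map Prod.fst).get (Fin.cast hlen.symm i) = (L.get i).1 := by
    simp [List.get_eq_getElem]
  have h2 : (L.map Prod.fst).get (Fin.cast hlen.symm j) = (L.get j).1 := by
    simp [List.get_eq_getElem]
  have := (List.Nodup.get_inj_iff hnd (i := Fin.cast hlen.symm i) (j := Fin.cast hlen.symm j)).mp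
    (by rw [h1, h2, h])
  exact Fin.ext (by simpa using congrArg Fin.val this)

/-- each man appears in an exposed rotation with his current partner -/
theorem exp_get_snd {I : SMInst n} {M : Fin n ≃ Fin n} {L : List (Fin n × Fin n)}
    (h : I.ExposedIn M L) (i : Fin L.length) : M (L.get i).1 = (L.get i).2 :=
  exp_matched h _ (List.get_mem L i)

theorem exp_symm_snd {I : SMInst n} {M : Fin n ≃ Fin n} {L : List (Fin n × Fin n)}
    (h : I.ExposedIn M L) (i : Fin L.length) : M.symm (L.get i).2 = (L.get i).1 := by
  rw [← exp_get_snd h i, Equiv.symm_apply_apply]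

/-- a single elimination makes every man weakly worse, rotation men strictly worse -/
theorem elim_mono {I : SMInst n} {M M' : Fin n ≃ Fin n} {L : List (Fin n × Fin n)}
    (h : I.Elim M M' L) (a : Fin n) : I.mrank a (M a) ≤ I.mrank a (M' a) := by
  by_cases ha : a ∈ L.map Prod.fst
  · obtain ⟨i, rfl⟩ := mem_fst_iff.mp ha
    rw [elim_move h i, exp_get_snd (elim_exp h) i]
    exact le_of_lt (exp_b1 (elim_exp h) i)
  · rw [elim_frozen h a ha]

theorem elim_strict {I : SMInst n} {M M' : Fin n ≃ Fin n} {L : List (Fin n × Fin n)}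
    (h : I.Elim M M' L) {a : Fin n} (ha : a ∈ L.map Prod.fst) :
    I.mrank a (M a) < I.mrank a (M' a) := by
  obtain ⟨i, rfl⟩ := mem_fst_iff.mp ha
  rw [elim_move h i, exp_get_snd (elim_exp h) i]
  exact exp_b1 (elim_exp h) i

theorem seq_mono {I : SMInst n} {Ls : List (List (Fin n × Fin n))} {M M' : Fin n ≃ Fin n}
    (h : I.ElimSeq M Ls M') (a : Fin n) : I.mrank a (M a) ≤ I.mrank a (M' a) := by
  induction Ls generalizing M with
  | nil => rw [elimSeq_nil.mp h]
  | cons L Ls ih =>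
    obtain ⟨Mmid, h1, h2⟩ := elimSeq_cons.mp h
    exact le_trans (elim_mono h1 a) (ih h2)

theorem seq_dominates {I : SMInst n} {Ls : List (List (Fin n × Fin n))} {M M' : Fin n ≃ Fin n}
    (h : I.ElimSeq M Ls M') : I.Dominates M M' := fun a => seq_mono h a

/-- every woman weakly improves in a single elimination -/
theorem elim_women_mono {I : SMInst n} {M M' : Fin n ≃ Fin n} {L : List (Fin n × Fin n)}
    (h : I.Elim M M' L) (y : Fin n) : I.wrank y (M'.symm y) ≤ I.wrank y (M.symm y) := by
  have hxy : M' (M'.symm y) = y := Equiv.apply_symm_apply M' y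
  by_cases hmem : M'.symm y ∈ L.map Prod.fst
  · obtain ⟨i, hi⟩ := mem_fst_iff.mp hmem
    have hiy : M' (L.get i).1 = y := by rw [hi, hxy]
    have hy : y = (L.get (nx i)).2 := by rw [← hiy, elim_move h i]
    have hsy : M.symm y = (L.get (nx i)).1 := by
      rw [hy]; exact exp_symm_snd (elim_exp h) (nx i)
    have hx' : M'.symm y = (L.get i).1 := hi.symm
    rw [hsy, hx', hy]
    exact le_of_lt (exp_b2 (elim_exp h) i)
  · have hMy : M (M'.symm y) = y := by rw [← elim_frozen h _ hmem, hxy]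
    have : M.symm y = M'.symm y := by
      conv_lhs => rw [← hMy]
      rw [Equiv.symm_apply_apply]
    rw [this]

/-- elimination of an exposed rotation preserves stability -/
theorem elim_stable {I : SMInst n} {M M' : Fin n ≃ Fin n} {L : List (Fin n × Fin n)}
    (hM : I.IsStable M) (h : I.Elim M M' L) : I.IsStable M' := by
  intro x y hb
  obtain ⟨h1, h2⟩ := hb
  have h2' : I.wrank y x < I.wrank y (M.symm y) := lt_of_lt_of_le h2 (elim_women_mono h y)
  by_cases hmem : x ∈ L.map Prod.fst
  · obtain ⟨i, rfl⟩ := mem_fst_iff.mp hmem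
    rw [elim_move h i] at h1
    rcases lt_trichotomy (I.mrank (L.get i).1 y) (I.mrank (L.get i).1 (L.get i).2) with hv | hv | hv
    · exact hM _ y ⟨by rwa [exp_get_snd (elim_exp h) i], h2'⟩
    · have : y = (L.get i).2 := I.mrank_inj _ hv
      subst this
      rw [exp_symm_snd (elim_exp h) i] at h2'
      exact absurd h2' (lt_irrefl _)
    · exact exp_b3 (elim_exp h) i y hv h1 h2'
  · rw [elim_frozen h x hmem] at h1
    exact hM x y ⟨h1, h2'⟩

/-- if men are (weakly) worse, women are (weakly) better, pointwise -/
theorem women_mono {I : SMInst n} {M M' : Fin n ≃ Fin n}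
    (hM' : I.IsStable M') (hd : I.Dominates M M') (y : Fin n) :
    I.wrank y (M'.symm y) ≤ I.wrank y (M.symm y) := by
  set x := M.symm y with hx
  have hxy : M x = y := Equiv.apply_symm_apply M y
  by_cases hq : M' x = y
  · rw [← hq, Equiv.symm_apply_apply]
  · have hlt : I.mrank x y < I.mrank x (M' x) := by
      have := hd x; rw [hxy] at this
      exact lt_of_le_of_ne this (fun hc => hq (I.mrank_inj x hc).symm)
    by_contra hcon
    push_neg at hcon
    exact hM' x y ⟨hlt, hcon⟩

/-- the "meet" of two stable matchings: every man gets his worse partner;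
constructed via the women-side join. -/
theorem meet_exists_s13 {I : SMInst n} {M₁ M₂ : Fin n ≃ Fin n}
    (hM₁ : I.IsStable M₁) (hM₂ : I.IsStable M₂) :
    ∃ M₃ : Fin n ≃ Fin n, I.IsStable M₃ ∧ (∀ a, M₃ a = M₁ a ∨ M₃ a = M₂ a) ∧
      I.Dominates M₁ M₃ ∧ I.Dominates M₂ M₃ := by
  classical
  set g : Fin n → Fin n := fun y =>
    if I.wrank y (M₁.symm y) ≤ I.wrank y (M₂.symm y) then M₁.symm y else M₂.symm y with hg
  have gcases : ∀ y, g y = M₁.symm y ∨ g y = M₂.symm y := by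
    intro y
    by_cases h : I.wrank y (M₁.symm y) ≤ I.wrank y (M₂.symm y)
    · left; simp [hg, h]
    · right; simp [hg, h]
  have gbest : ∀ y, I.wrank y (g y) ≤ I.wrank y (M₁.symm y) ∧
      I.wrank y (g y) ≤ I.wrank y (M₂.symm y) := by
    intro y
    by_cases h : I.wrank y (M₁.symm y) ≤ I.wrank y (M₂.symm y)
    · simp [hg, h]
    · simp only [hg, if_neg h]
      exact ⟨le_of_not_ge h, le_refl _⟩
  -- mixed-case auxiliary for injectivity
  have gaux : ∀ (y₁ y₂ a : Fin n), M₁ a = y₁ → M₂ a = y₂ → y₁ ≠ y₂ →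
      I.wrank y₁ a < I.wrank y₁ (M₂.symm y₁) → I.wrank y₂ a < I.wrank y₂ (M₁.symm y₂) →
      False := by
    intro y₁ y₂ a h1 h2 hne hw1 hw2
    rcases lt_trichotomy (I.mrank a y₁) (I.mrank a y₂) with hv | hv | hv
    · exact hM₂ a y₁ ⟨by rwa [h2], hw1⟩
    · exact hne (I.mrank_inj a hv)
    · exact hM₁ a y₂ ⟨by rwa [h1], hw2⟩
  have ginj : Function.Injective g := by
    intro y₁ y₂ hyy
    by_contra hne
    rcases gcases y₁ with hc1 | hc1 <;> rcases gcases y₂ with hc2 | hc2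
    · exact hne (M₁.symm.injective (hc1 ▸ hc2 ▸ hyy))
    · -- g y₁ = M₁.symm y₁, g y₂ = M₂.symm y₂
      have h1 : M₁ (g y₁) = y₁ := by rw [hc1, Equiv.apply_symm_apply]
      have h2 : M₂ (g y₁) = y₂ := by rw [hyy, hc2, Equiv.apply_symm_apply]
      have hw1 : I.wrank y₁ (g y₁) < I.wrank y₁ (M₂.symm y₁) := by
        refine lt_of_le_of_ne (gbest y₁).2 (fun hcon => ?_)
        have hx : g y₁ = M₂.symm y₁ := I.wrank_inj y₁ hcon
        rw [hx, Equiv.apply_symm_apply] at h2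
        exact hne h2
      have hw2 : I.wrank y₂ (g y₁) < I.wrank y₂ (M₁.symm y₂) := by
        have hle : I.wrank y₂ (g y₁) ≤ I.wrank y₂ (M₁.symm y₂) := by
          rw [hyy]; exact (gbest y₂).1
        refine lt_of_le_of_ne hle (fun hcon => ?_)
        have hx : g y₁ = M₁.symm y₂ := I.wrank_inj y₂ hcon
        rw [hx, Equiv.apply_symm_apply] at h1
        exact hne h1.symm
      exact gaux y₁ y₂ (g y₁) h1 h2 hne hw1 hw2
    · -- symmetric mixed case
      have h2 : M₂ (g y₁) = y₁ := by rw [hc1, Equiv.apply_symm_apply]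
      have h1 : M₁ (g y₁) = y₂ := by rw [hyy, hc2, Equiv.apply_symm_apply]
      have hw1 : I.wrank y₁ (g y₁) < I.wrank y₁ (M₁.symm y₁) := by
        refine lt_of_le_of_ne (gbest y₁).1 (fun hcon => ?_)
        have hx : g y₁ = M₁.symm y₁ := I.wrank_inj y₁ hcon
        rw [hx, Equiv.apply_symm_apply] at h1
        exact hne h1
      have hw2 : I.wrank y₂ (g y₁) < I.wrank y₂ (M₂.symm y₂) := by
        have hle : I.wrank y₂ (g y₁) ≤ I.wrank y₂ (M₂.symm y₂) := by
          rw [hyy]; exact (gbest y₂).2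
        refine lt_of_le_of_ne hle (fun hcon => ?_)
        have hx : g y₁ = M₂.symm y₂ := I.wrank_inj y₂ hcon
        rw [hx, Equiv.apply_symm_apply] at h2
        exact hne h2.symm
      exact gaux y₂ y₁ (g y₁) h1 h2 (Ne.symm hne) hw2 hw1
    · exact hne (M₂.symm.injective (hc1 ▸ hc2 ▸ hyy))
  have gbij : Function.Bijective g := Finite.injective_iff_bijective.mp ginj
  set ge : Fin n ≃ Fin n := Equiv.ofBijective g gbij with hge
  have hgeapp : ∀ y, ge y = g y := fun y => rfl
  have hsymm : (ge.symm).symm = ge := Equiv.symm_symm ge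
  have hga : ∀ a, g (ge.symm a) = a := fun a => ge.apply_symm_apply a
  have m1 : ∀ a, ge.symm a = M₁ a ∨ ge.symm a = M₂ a := by
    intro a
    rcases gcases (ge.symm a) with hc | hc
    · left
      have h : M₁.symm (ge.symm a) = a := by rw [← hc, hga]
      have := congrArg M₁ h
      rwa [Equiv.apply_symm_apply] at this
    · right
      have h : M₂.symm (ge.symm a) = a := by rw [← hc, hga]
      have := congrArg M₂ h
      rwa [Equiv.apply_symm_apply] at this
  refine ⟨ge.symm, ?_, m1, ?_, ?_⟩
  · -- stability
    intro x y hb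
    obtain ⟨h1, h2⟩ := hb
    rw [hsymm, hgeapp] at h2
    rcases m1 x with hc | hc
    · rw [hc] at h1
      exact hM₁ x y ⟨h1, lt_of_lt_of_le h2 (gbest y).1⟩
    · rw [hc] at h1
      exact hM₂ x y ⟨h1, lt_of_lt_of_le h2 (gbest y).2⟩
  · -- Dominates M₁ (ge.symm)
    intro a
    rcases m1 a with hc | hc
    · rw [hc]
    · rw [hc]
      by_cases hq : M₁.symm (M₂ a) = a
      · have h := congrArg M₁ hq
        rw [Equiv.apply_symm_apply] at h
        rw [← h]
      · have hgy : g (M₂ a) = a := by rw [← hc, hga]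
        have hcond : ¬ I.wrank (M₂ a) (M₁.symm (M₂ a)) ≤ I.wrank (M₂ a) (M₂.symm (M₂ a)) := by
          intro hcond
          rw [hg] at hgy
          simp only [if_pos hcond] at hgy
          exact hq hgy
        have hstrict : I.wrank (M₂ a) a < I.wrank (M₂ a) (M₁.symm (M₂ a)) := by
          have := not_le.mp hcond
          rwa [Equiv.symm_apply_apply] at this
        by_contra hcon
        push_neg at hcon
        exact hM₁ a (M₂ a) ⟨hcon, hstrict⟩
  · -- Dominates M₂ (ge.symm)
    intro a
    rcases m1 a with hc | hc
    · rw [hc]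
      by_cases hq : M₂.symm (M₁ a) = a
      · have h := congrArg M₂ hq
        rw [Equiv.apply_symm_apply] at h
        rw [← h]
      · have hgy : g (M₁ a) = a := by rw [← hc, hga]
        have hcond : I.wrank (M₁ a) (M₁.symm (M₁ a)) ≤ I.wrank (M₁ a) (M₂.symm (M₁ a)) := by
          by_contra hcond
          rw [hg] at hgy
          simp only [if_neg hcond] at hgy
          exact hq hgy
        have hstrict : I.wrank (M₁ a) a < I.wrank (M₁ a) (M₂.symm (M₁ a)) := by
          rw [Equiv.symm_apply_apply] at hcond
          refine lt_of_le_of_ne hcond (fun hcc => hq (I.wrank_inj _ hcc).symm)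
        by_contra hcon
        push_neg at hcon
        exact hM₂ a (M₁ a) ⟨hcon, hstrict⟩
    · rw [hc]


/-- key step: if `M` strictly dominates `M'`, some rotation exposed in `M` can be
eliminated while keeping domination over `M'`. -/
theorem step_exists {I : SMInst n} {M M' : Fin n ≃ Fin n}
    (hM : I.IsStable M) (hM' : I.IsStable M') (hd : I.Dominates M M') (hne : M ≠ M') :
    ∃ K M₂, I.Elim M M₂ K ∧ I.Dominates M₂ M' ∧ ∃ a, I.mrank a (M a) < I.mrank a (M₂ a) := by
  classical
  have hexD : ∃ a, M a ≠ M' a := by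
    by_contra hc
    push_neg at hc
    exact hne (Equiv.ext hc)
  -- the successor woman of a man who must still move
  have hstep : ∀ d : {a : Fin n // M a ≠ M' a}, ∃ e : Fin n,
      (I.mrank d.1 (M d.1) < I.mrank d.1 e ∧ I.wrank e d.1 < I.wrank e (M.symm e)) ∧
      ∀ y, I.mrank d.1 (M d.1) < I.mrank d.1 y → I.wrank y d.1 < I.wrank y (M.symm y) →
        I.mrank d.1 e ≤ I.mrank d.1 y := by
    rintro ⟨a, ha⟩
    have hcand : I.mrank a (M a) < I.mrank a (M' a) ∧
        I.wrank (M' a) a < I.wrank (M' a) (M.symm (M' a)) := by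
      constructor
      · exact lt_of_le_of_ne (hd a) (fun hc => ha (I.mrank_inj a hc))
      · have h1 : I.wrank (M' a) (M'.symm (M' a)) ≤ I.wrank (M' a) (M.symm (M' a)) :=
          women_mono hM' hd (M' a)
        rw [Equiv.symm_apply_apply] at h1
        refine lt_of_le_of_ne h1 (fun hc => ?_)
        have hth : a = M.symm (M' a) := I.wrank_inj _ hc
        have h2 := congrArg M hth
        rw [Equiv.apply_symm_apply] at h2
        exact ha h2
    set C : Finset (Fin n) := Finset.univ.filter
      (fun y => I.mrank a (M a) < I.mrank a y ∧ I.wrank y a < I.wrank y (M.symm y)) with hc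
    have hCne : C.Nonempty := ⟨M' a, by simp [hc, hcand.1, hcand.2]⟩
    obtain ⟨e, heC, hemin⟩ := Finset.exists_min_image C (I.mrank a) hCne
    simp only [hc, Finset.mem_filter, Finset.mem_univ, true_and] at heC
    refine ⟨e, heC, ?_⟩
    intro y hy1 hy2
    exact hemin y (by simp [hc, hy1, hy2])
  choose sw hsw hswmin using hstep
  -- the "next man" function on D
  have hnextmem : ∀ d : {a : Fin n // M a ≠ M' a}, M (M.symm (sw d)) ≠ M' (M.symm (sw d)) := by
    intro d
    rw [Equiv.apply_symm_apply]
    intro hc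
    -- M' (M.symm (sw d)) = sw d : derive a blocking pair of M'
    have hble : I.mrank d.1 (sw d) ≤ I.mrank d.1 (M' d.1) := by
      refine hswmin d (M' d.1) (lt_of_le_of_ne (hd d.1) (fun hcc => d.2 (I.mrank_inj _ hcc))) ?_
      have h1 : I.wrank (M' d.1) (M'.symm (M' d.1)) ≤ I.wrank (M' d.1) (M.symm (M' d.1)) :=
        women_mono hM' hd (M' d.1)
      rw [Equiv.symm_apply_apply] at h1
      refine lt_of_le_of_ne h1 (fun hcc => ?_)
      have hth : d.1 = M.symm (M' d.1) := I.wrank_inj _ hcc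
      have h2 := congrArg M hth
      rw [Equiv.apply_symm_apply] at h2
      exact d.2 h2
    have hblt : I.mrank d.1 (sw d) < I.mrank d.1 (M' d.1) := by
      refine lt_of_le_of_ne hble (fun hcc => ?_)
      have hsd : sw d = M' d.1 := I.mrank_inj _ hcc
      have h4 : M' d.1 = M' (M.symm (sw d)) := by rw [← hsd]; exact hc
      have h5 : d.1 = M.symm (sw d) := M'.injective h4
      have h6 := congrArg M h5
      rw [Equiv.apply_symm_apply] at h6
      have h7 := (hsw d).1
      rw [h6] at h7
      exact lt_irrefl _ h7
    refine hM' d.1 (sw d) ⟨hblt, ?_⟩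
    have hsymm' : M'.symm (sw d) = M.symm (sw d) := by
      conv_lhs => rw [hc, Equiv.symm_apply_apply]
    rw [hsymm']
    exact (hsw d).2
  set next : {a : Fin n // M a ≠ M' a} → {a : Fin n // M a ≠ M' a} :=
    fun d => ⟨M.symm (sw d), hnextmem d⟩ with hnext
  -- find a periodic point
  obtain ⟨i, j, hij, hfij⟩ :=
    Finite.exists_ne_map_eq_of_infinite (fun t : ℕ => next^[t] ⟨hexD.choose, hexD.choose_spec⟩)
  -- wlog i < j
  have hper0 : ∃ b, ∃ p, 0 < p ∧ next^[p] b = b := by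
    rcases lt_or_gt_of_ne hij with h | h
    · refine ⟨next^[i] ⟨hexD.choose, hexD.choose_spec⟩, j - i, by omega, ?_⟩
      rw [← Function.iterate_add_apply]
      have : j - i + i = j := by omega
      rw [this, hfij]
    · refine ⟨next^[j] ⟨hexD.choose, hexD.choose_spec⟩, i - j, by omega, ?_⟩
      rw [← Function.iterate_add_apply]
      have : i - j + j = i := by omega
      rw [this, ← hfij]
  obtain ⟨b, hpex⟩ := hper0
  set p₀ := Nat.find hpex with hp₀
  obtain ⟨hp₀pos, hp₀per⟩ : 0 < p₀ ∧ next^[p₀] b = b := Nat.find_spec hpex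
  have hp₀min : ∀ q, q < p₀ → ¬(0 < q ∧ next^[q] b = b) := fun q hq => Nat.find_min hpex hq
  have hnotfix : ∀ d, next d ≠ d := by
    intro d hc
    have h1 : M (next d).1 = sw d := by
      show M (M.symm (sw d)) = sw d
      exact Equiv.apply_symm_apply M (sw d)
    rw [hc] at h1
    have := (hsw d).1
    rw [h1] at this
    exact lt_irrefl _ this
  have hp₀2 : 2 ≤ p₀ := by
    by_contra hlt
    push_neg at hlt
    have hp1 : p₀ = 1 := by omega
    have hfix : next b = b := by
      have h1 := hp₀per
      rw [hp1] at h1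
      simpa using h1
    exact hnotfix b hfix
  -- injectivity on the orbit
  have hinj : ∀ t u, t < p₀ → u < p₀ → next^[t] b = next^[u] b → t = u := by
    have key : ∀ t u, t < u → u < p₀ → next^[t] b = next^[u] b → False := by
      intro t u htu hu he
      have h1 : next^[p₀ - u + t] b = b := by
        rw [Function.iterate_add_apply, he, ← Function.iterate_add_apply]
        have : p₀ - u + u = p₀ := by omega
        rw [this, hp₀per]
      exact hp₀min (p₀ - u + t) (by omega) ⟨by omega, h1⟩
    intro t u ht hu he
    rcases lt_trichotomy t u with h | h | h
    · exact absurd he (fun hc => key t u h hu hc)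
    · exact h
    · exact absurd he.symm (fun hc => key u t h ht hc)
  have hmodlt : ∀ t : ℕ, (t + 1) % p₀ < p₀ := fun t => Nat.mod_lt _ hp₀pos
  have hperiter : ∀ t : ℕ, next^[t % p₀] b = next^[t] b := by
    intro t
    exact Function.IsPeriodicPt.iterate_mod_apply hp₀per t
  have hmodinj : ∀ x y : ℕ, 0 < x → x ≤ p₀ → 0 < y → y ≤ p₀ → x % p₀ = y % p₀ → x = y := by
    intro x y hx hxle hy hyle hmod
    rcases eq_or_lt_of_le hxle with h | h <;> rcases eq_or_lt_of_le hyle with h' | h'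
    · omega
    · rw [h, Nat.mod_self, Nat.mod_eq_of_lt h'] at hmod; omega
    · rw [h', Nat.mod_self, Nat.mod_eq_of_lt h] at hmod; omega
    · rw [Nat.mod_eq_of_lt h, Nat.mod_eq_of_lt h'] at hmod; exact hmod
  -- the rotation list
  set K : List (Fin n × Fin n) :=
    (List.range p₀).map (fun t => ((next^[t] b).1, M (next^[t] b).1)) with hK
  have hKlen : K.length = p₀ := by simp [hK]
  have hKget : ∀ i : Fin K.length, K.get i = ((next^[i.1] b).1, M (next^[i.1] b).1) := by
    intro i
    have hi : i.1 < p₀ := by rw [← hKlen]; exact i.2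
    simp [hK, List.get_eq_getElem]
  have hKnxget : ∀ i : Fin K.length, K.get (nx i) = ((next^[i.1 + 1] b).1, M (next^[i.1 + 1] b).1) := by
    intro i
    have h1 := hKget (nx i)
    have h2 : (nx i).1 = (i.1 + 1) % p₀ := by simp [nx, hKlen]
    rw [h1, h2, hperiter (i.1 + 1)]
  have hKnx1 : ∀ i : Fin K.length,
      (K.get (nx i)).1 = M.symm (sw (next^[i.1] b)) ∧ (K.get (nx i)).2 = sw (next^[i.1] b) := by
    intro i
    rw [hKnxget i]
    have h1 : next^[i.1 + 1] b = next (next^[i.1] b) := Function.iterate_succ_apply' next i.1 b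
    constructor
    · rw [h1]
    · rw [h1]
      show M (M.symm (sw (next^[i.1] b))) = sw (next^[i.1] b)
      exact Equiv.apply_symm_apply M _
  have hmemfst : ∀ a : Fin n, a ∈ K.map Prod.fst ↔ ∃ t, t < p₀ ∧ (next^[t] b).1 = a := by
    intro a
    simp [hK, List.mem_map, List.mem_range]
  -- exposure
  have hexp : I.ExposedIn M K := by
    refine ⟨by rw [hKlen]; exact hp₀2, ?_, ?_, ?_⟩
    · -- nodup
      rw [hK, List.map_map]
      refine List.Nodup.map_on ?_ (List.nodup_range (n := p₀))
      intro t ht u hu he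
      rw [List.mem_range] at ht hu
      have : next^[t] b = next^[u] b := Subtype.coe_injective he
      exact hinj t u ht hu this
    · -- matched
      intro p hp
      rw [hK, List.mem_map] at hp
      obtain ⟨t, _, rfl⟩ := hp
      rfl
    · -- bullets
      intro i
      obtain ⟨hn1, hn2⟩ := hKnx1 i
      have hg := hKget i
      refine ⟨?_, ?_, ?_⟩
      · show I.mrank (K.get i).1 (K.get i).2 < I.mrank (K.get i).1 (K.get (nx i)).2
        rw [hg, hn2]
        exact (hsw (next^[i.1] b)).1
      · show I.wrank (K.get (nx i)).2 (K.get i).1 < I.wrank (K.get (nx i)).2 (K.get (nx i)).1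
        rw [hg, hn1, hn2]
        exact (hsw (next^[i.1] b)).2
      · intro y hy1 hy2
        have hy2' : I.mrank (K.get i).1 y < I.mrank (K.get i).1 (K.get (nx i)).2 := hy2
        rw [hg] at hy1
        rw [hg, hn2] at hy2'
        intro hacc
        rw [hg] at hacc
        have hmin := hswmin (next^[i.1] b) y hy1 hacc
        exact absurd hy2' (not_lt.mpr hmin)
  -- the permutation after elimination
  have hOmem : ∀ t, ∃ t', t' < p₀ ∧ next^[t'] b = next^[t] b :=
    fun t => ⟨t % p₀, Nat.mod_lt _ hp₀pos, hperiter t⟩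
  set s : Fin n → Fin n := fun a =>
    if h : ∃ t, t < p₀ ∧ (next^[t] b).1 = a then (next^[h.choose + 1] b).1 else a with hs
  have hsval : ∀ t, t < p₀ → s (next^[t] b).1 = (next^[t + 1] b).1 := by
    intro t ht
    have hex : ∃ u, u < p₀ ∧ (next^[u] b).1 = (next^[t] b).1 := ⟨t, ht, rfl⟩
    have hspec := hex.choose_spec
    have : hex.choose = t :=
      hinj _ _ hspec.1 ht (Subtype.coe_injective hspec.2)
    rw [hs]
    simp only [dif_pos hex]
    rw [this]
  have hsorb : ∀ a, (∃ t, t < p₀ ∧ (next^[t] b).1 = a) →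
      ∃ t, t < p₀ ∧ (next^[t] b).1 = s a := by
    rintro a ⟨t, ht, rfl⟩
    rw [hsval t ht]
    obtain ⟨t', ht', he⟩ := hOmem (t + 1)
    exact ⟨t', ht', by rw [he]⟩
  have hsout : ∀ a, ¬(∃ t, t < p₀ ∧ (next^[t] b).1 = a) → s a = a := by
    intro a h
    rw [hs]; simp only [dif_neg h]
  have hsinj : Function.Injective s := by
    intro a₁ a₂ he
    by_cases h1 : ∃ t, t < p₀ ∧ (next^[t] b).1 = a₁ <;>
      by_cases h2 : ∃ t, t < p₀ ∧ (next^[t] b).1 = a₂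
    · obtain ⟨t₁, ht₁, rfl⟩ := h1
      obtain ⟨t₂, ht₂, rfl⟩ := h2
      rw [hsval t₁ ht₁, hsval t₂ ht₂] at he
      have he' : next^[t₁ + 1] b = next^[t₂ + 1] b := Subtype.coe_injective he
      have hm : next^[(t₁ + 1) % p₀] b = next^[(t₂ + 1) % p₀] b := by
        rw [hperiter, hperiter, he']
      have := hinj _ _ (hmodlt t₁) (hmodlt t₂) hm
      have := hmodinj (t₁ + 1) (t₂ + 1) (by omega) (by omega) (by omega) (by omega) this
      have : t₁ = t₂ := by omega
      rw [this]
    · exfalso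
      rw [hsout a₂ h2] at he
      exact h2 (he ▸ hsorb a₁ h1)
    · exfalso
      rw [hsout a₁ h1] at he
      exact h1 (he.symm ▸ hsorb a₂ h2)
    · rw [hsout a₁ h1, hsout a₂ h2] at he
      exact he
  set σ : Fin n ≃ Fin n := Equiv.ofBijective s (Finite.injective_iff_bijective.mp hsinj) with hσ
  refine ⟨K, σ.trans M, ⟨hexp, ?_, ?_⟩, ?_, ?_⟩
  · -- moves
    intro i
    have hi : i.1 < p₀ := by rw [← hKlen]; exact i.2
    show (σ.trans M) (K.get i).1 = (K.get (nx i)).2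
    rw [(hKnx1 i).2, hKget i]
    show M (s (next^[i.1] b).1) = sw (next^[i.1] b)
    rw [hsval i.1 hi, Function.iterate_succ_apply' next i.1 b]
    show M (M.symm (sw (next^[i.1] b))) = sw (next^[i.1] b)
    exact Equiv.apply_symm_apply M _
  · -- frozen
    intro a ha
    rw [hmemfst] at ha
    show M (s a) = M a
    rw [hsout a ha]
  · -- dominates M'
    intro a
    by_cases ha : ∃ t, t < p₀ ∧ (next^[t] b).1 = a
    · obtain ⟨t, ht, rfl⟩ := ha
      show I.mrank _ (M (s (next^[t] b).1)) ≤ _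
      rw [hsval t ht]
      have h1 : next^[t + 1] b = next (next^[t] b) := Function.iterate_succ_apply' next t b
      rw [h1]
      have h2 : M (M.symm (sw (next^[t] b))) = sw (next^[t] b) := Equiv.apply_symm_apply M _
      show I.mrank _ (M (M.symm (sw (next^[t] b)))) ≤ _
      rw [h2]
      set d := next^[t] b with hdd
      -- minimality: sw d is at least as good as M' d
      refine hswmin d (M' d.1) (lt_of_le_of_ne (hd d.1) (fun hcc => d.2 (I.mrank_inj _ hcc))) ?_
      have h3 : I.wrank (M' d.1) (M'.symm (M' d.1)) ≤ I.wrank (M' d.1) (M.symm (M' d.1)) :=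
        women_mono hM' hd (M' d.1)
      rw [Equiv.symm_apply_apply] at h3
      refine lt_of_le_of_ne h3 (fun hcc => ?_)
      have hth : d.1 = M.symm (M' d.1) := I.wrank_inj _ hcc
      have h4 := congrArg M hth
      rw [Equiv.apply_symm_apply] at h4
      exact d.2 h4
    · show I.mrank _ (M (s a)) ≤ _
      rw [hsout a ha]
      exact hd a
  · -- strict witness
    refine ⟨b.1, ?_⟩
    show I.mrank _ (M b.1) < I.mrank _ (M (s b.1))
    have h0 : (next^[0] b).1 = b.1 := rfl
    have := hsval 0 (by omega)
    rw [h0] at this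
    rw [this]
    have h1 : next^[0 + 1] b = next b := by simp
    rw [h1]
    show I.mrank _ (M b.1) < I.mrank _ (M (M.symm (sw b)))
    rw [Equiv.apply_symm_apply]
    exact (hsw b).1

/-- reachability: a dominated stable matching can be reached by eliminations. -/
theorem reach_s13 {I : SMInst n} {M M' : Fin n ≃ Fin n}
    (hM : I.IsStable M) (hM' : I.IsStable M') (hd : I.Dominates M M') :
    ∃ Ls, I.ElimSeq M Ls M' := by
  classical
  suffices h : ∀ N (M : Fin n ≃ Fin n), I.IsStable M → I.Dominates M M' →
      (∑ a, (I.mrank a (M' a) - I.mrank a (M a))) ≤ N → ∃ Ls, I.ElimSeq M Ls M' from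
    h _ M hM hd (le_refl _)
  intro N
  induction N with
  | zero =>
    intro M hM hd hN
    have hz := Nat.le_zero.mp hN
    have heq : M' = M := by
      refine Equiv.ext (fun a => ?_)
      have h0 : I.mrank a (M' a) - I.mrank a (M a) = 0 :=
        Finset.sum_eq_zero_iff.mp hz a (Finset.mem_univ a)
      have h1 := hd a
      exact I.mrank_inj a (by omega)
    exact ⟨[], heq⟩
  | succ N ih =>
    intro M hM hd hN
    by_cases he : M' = M
    · exact ⟨[], he⟩
    · obtain ⟨K, M₂, hElim, hd₂, a₀, ha₀⟩ := step_exists hM hM' hd (Ne.symm he)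
      have hM₂ : I.IsStable M₂ := elim_stable hM hElim
      have hlt : (∑ a, (I.mrank a (M' a) - I.mrank a (M₂ a))) <
          (∑ a, (I.mrank a (M' a) - I.mrank a (M a))) := by
        refine Finset.sum_lt_sum (fun i _ => ?_) ⟨a₀, Finset.mem_univ _, ?_⟩
        · have := elim_mono hElim i; omega
        · have h1 := hd₂ a₀; omega
      obtain ⟨Ls, hLs⟩ := ih M₂ hM₂ hd₂ (by omega)
      exact ⟨K :: Ls, M₂, hElim, hLs⟩

theorem exit_not_lt {I : SMInst n} {M₁ M₂ : Fin n ≃ Fin n} {K L : List (Fin n × Fin n)}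
    (hK : I.ExposedIn M₁ K) (hL : I.ExposedIn M₂ L) (hsub : ∀ p ∈ K, p ∈ L)
    {i : Fin K.length} {j : Fin L.length} (hij : K.get i = L.get j) :
    ¬ I.mrank (L.get j).1 (K.get (nx i)).2 < I.mrank (L.get j).1 (L.get (nx j)).2 := by
  intro hlt
  have hb1 := exp_b1 hK i
  rw [hij] at hb1
  have hb3 := exp_b3 hL j (K.get (nx i)).2 hb1 hlt
  apply hb3
  have hmem : K.get (nx i) ∈ L := hsub _ (List.get_mem _ _)
  have hsymm : M₂.symm (K.get (nx i)).2 = (K.get (nx i)).1 := by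
    have hm := exp_matched hL _ hmem
    rw [← hm, Equiv.symm_apply_apply]
  rw [hsymm, ← hij]
  exact exp_b2 hK i

theorem exit_not_lt_same {I : SMInst n} {M : Fin n ≃ Fin n} {K L : List (Fin n × Fin n)}
    (hK : I.ExposedIn M K) (hL : I.ExposedIn M L)
    {i : Fin K.length} {j : Fin L.length} (hij : K.get i = L.get j) :
    ¬ I.mrank (L.get j).1 (K.get (nx i)).2 < I.mrank (L.get j).1 (L.get (nx j)).2 := by
  intro hlt
  have hb1 := exp_b1 hK i
  rw [hij] at hb1
  have hb3 := exp_b3 hL j (K.get (nx i)).2 hb1 hlt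
  apply hb3
  rw [exp_symm_snd hK (nx i), ← hij]
  exact exp_b2 hK i

/-- two rotations exposed in (possibly different) matchings with the same pair set
agree on successors. -/
theorem exit_eq {I : SMInst n} {M₁ M₂ : Fin n ≃ Fin n} {K L : List (Fin n × Fin n)}
    (hK : I.ExposedIn M₁ K) (hL : I.ExposedIn M₂ L) (hset : K.toFinset = L.toFinset)
    {i : Fin K.length} {j : Fin L.length} (hij : K.get i = L.get j) :
    K.get (nx i) = L.get (nx j) := by
  have hsubKL : ∀ p ∈ K, p ∈ L := fun p hp =>
    List.mem_toFinset.mp (hset ▸ List.mem_toFinset.mpr hp)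
  have hsubLK : ∀ p ∈ L, p ∈ K := fun p hp =>
    List.mem_toFinset.mp (hset.symm ▸ List.mem_toFinset.mpr hp)
  have h2 : (K.get (nx i)).2 = (L.get (nx j)).2 := by
    rcases lt_trichotomy (I.mrank (L.get j).1 (K.get (nx i)).2)
      (I.mrank (L.get j).1 (L.get (nx j)).2) with h | h | h
    · exact absurd h (exit_not_lt hK hL hsubKL hij)
    · exact I.mrank_inj _ h
    · have hno := exit_not_lt hL hK hsubLK hij.symm
      rw [← hij] at h
      exact absurd h hno
  have h1 : (K.get (nx i)).1 = (L.get (nx j)).1 := by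
    have hmk : M₁ (K.get (nx i)).1 = (K.get (nx i)).2 := exp_get_snd hK (nx i)
    have hml : M₁ (L.get (nx j)).1 = (L.get (nx j)).2 :=
      exp_matched hK _ (hsubLK _ (List.get_mem _ _))
    apply M₁.injective
    rw [hmk, hml, h2]
  exact Prod.ext h1 h2

/-- successors agree for two rotations exposed in the same matching sharing a pair. -/
theorem step_same {I : SMInst n} {M : Fin n ≃ Fin n} {K L : List (Fin n × Fin n)}
    (hK : I.ExposedIn M K) (hL : I.ExposedIn M L)
    {i : Fin K.length} {j : Fin L.length} (hij : K.get i = L.get j) :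
    K.get (nx i) = L.get (nx j) := by
  have h2 : (K.get (nx i)).2 = (L.get (nx j)).2 := by
    rcases lt_trichotomy (I.mrank (L.get j).1 (K.get (nx i)).2)
      (I.mrank (L.get j).1 (L.get (nx j)).2) with h | h | h
    · exact absurd h (exit_not_lt_same hK hL hij)
    · exact I.mrank_inj _ h
    · have hno := exit_not_lt_same hL hK hij.symm
      rw [← hij] at h
      exact absurd h hno
  have h1 : (K.get (nx i)).1 = (L.get (nx j)).1 := by
    apply M.injective
    rw [exp_get_snd hK (nx i), exp_get_snd hL (nx j), h2]
  exact Prod.ext h1 h2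

theorem nx_iter_val {α : Type*} {L : List α} (i : Fin L.length) :
    ∀ t, (nx^[t] i).1 = (i.1 + t) % L.length := by
  intro t
  induction t with
  | zero => simp [Nat.mod_eq_of_lt i.2]
  | succ t ih =>
    rw [Function.iterate_succ_apply']
    show ((nx^[t] i).1 + 1) % L.length = _
    rw [ih]
    have : (i.1 + t) % L.length + 1 ≡ i.1 + t + 1 [MOD L.length] :=
      Nat.ModEq.add_right 1 (Nat.mod_modEq _ _)
    exact this

theorem nx_reach {α : Type*} {L : List α} (i i' : Fin L.length) : ∃ t, nx^[t] i = i' := by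
  refine ⟨i'.1 + L.length - i.1, ?_⟩
  apply Fin.ext
  rw [nx_iter_val]
  have h1 : i.1 + (i'.1 + L.length - i.1) = i'.1 + L.length := by omega
  rw [h1, Nat.add_mod_right, Nat.mod_eq_of_lt i'.2]

theorem walk_same {I : SMInst n} {M : Fin n ≃ Fin n} {K L : List (Fin n × Fin n)}
    (hK : I.ExposedIn M K) (hL : I.ExposedIn M L)
    {i : Fin K.length} {j : Fin L.length} (hij : K.get i = L.get j) :
    ∀ t, K.get (nx^[t] i) = L.get (nx^[t] j) := by
  intro t
  induction t with
  | zero => exact hij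
  | succ t ih =>
    rw [Function.iterate_succ_apply', Function.iterate_succ_apply']
    exact step_same hK hL ih

/-- two rotations exposed in the same matching sharing a pair have equal pair sets. -/
theorem set_eq_of_shared_pair {I : SMInst n} {M : Fin n ≃ Fin n} {K L : List (Fin n × Fin n)}
    (hK : I.ExposedIn M K) (hL : I.ExposedIn M L)
    {i : Fin K.length} {j : Fin L.length} (hij : K.get i = L.get j) :
    K.toFinset = L.toFinset := by
  apply Finset.Subset.antisymm
  · intro p hp
    obtain ⟨i', hi'⟩ := List.mem_iff_get.mp (List.mem_toFinset.mp hp)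
    obtain ⟨t, ht⟩ := nx_reach i i'
    rw [← hi', ← ht, walk_same hK hL hij t]
    exact List.mem_toFinset.mpr (List.get_mem _ _)
  · intro p hp
    obtain ⟨j', hj'⟩ := List.mem_iff_get.mp (List.mem_toFinset.mp hp)
    obtain ⟨t, ht⟩ := nx_reach j j'
    rw [← hj', ← ht, ← walk_same hK hL hij t]
    exact List.mem_toFinset.mpr (List.get_mem _ _)

/-- an exposed rotation stays exposed in a dominated stable matching where its
pairs are still matched. -/
theorem transfer_down {I : SMInst n} {M₁ M₃ : Fin n ≃ Fin n} {K : List (Fin n × Fin n)}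
    (hK : I.ExposedIn M₁ K) (hM₃ : I.IsStable M₃) (hd : I.Dominates M₁ M₃)
    (hpairs : ∀ p ∈ K, M₃ p.1 = p.2) : I.ExposedIn M₃ K := by
  refine ⟨hK.1, hK.2.1, hpairs, ?_⟩
  intro i
  refine ⟨exp_b1 hK i, exp_b2 hK i, ?_⟩
  intro w h1 h2 hacc
  have hw : I.wrank w (M₃.symm w) ≤ I.wrank w (M₁.symm w) := women_mono hM₃ hd w
  exact exp_b3 hK i w h1 h2 (lt_of_lt_of_le hacc hw)

/-- a list with the same pair set as an exposed rotation is itself exposed there,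
provided it is a rotation somewhere. -/
theorem exposed_of_set_eq {I : SMInst n} {M₁ M₂ : Fin n ≃ Fin n} {K L : List (Fin n × Fin n)}
    (hK : I.ExposedIn M₁ K) (hL : I.ExposedIn M₂ L) (hset : K.toFinset = L.toFinset) :
    I.ExposedIn M₁ L := by
  have hsubLK : ∀ p ∈ L, p ∈ K := fun p hp =>
    List.mem_toFinset.mp (hset.symm ▸ List.mem_toFinset.mpr hp)
  refine ⟨hL.1, hL.2.1, fun p hp => exp_matched hK _ (hsubLK _ hp), ?_⟩
  intro j
  obtain ⟨i, hi⟩ := List.mem_iff_get.mp (hsubLK _ (List.get_mem L j))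
  have hnx := exit_eq hK hL hset hi
  refine ⟨?_, ?_, ?_⟩
  · have := exp_b1 hK i
    rwa [hi, hnx] at this
  · have := exp_b2 hK i
    rwa [hi, hnx] at this
  · intro w hw1 hw2
    have hb := exp_b3 hK i w (by rwa [hi]) (by rwa [hi, hnx])
    rwa [hi] at hb

theorem elimSeq_append {I : SMInst n} {A B : List (List (Fin n × Fin n))}
    {M₀ M₁ M₂ : Fin n ≃ Fin n} (h1 : I.ElimSeq M₀ A M₁) (h2 : I.ElimSeq M₁ B M₂) :
    I.ElimSeq M₀ (A ++ B) M₂ := by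
  induction A generalizing M₀ with
  | nil => rw [elimSeq_nil.mp h1] at h2; exact h2
  | cons J A' ih =>
    obtain ⟨Mmid, hJ, hs⟩ := elimSeq_cons.mp h1
    exact ⟨Mmid, hJ, ih hs⟩

theorem elimSeq_stable {I : SMInst n} {Ls : List (List (Fin n × Fin n))}
    {M M' : Fin n ≃ Fin n} (h : I.ElimSeq M Ls M') (hM : I.IsStable M) : I.IsStable M' := by
  induction Ls generalizing M with
  | nil => rw [elimSeq_nil.mp h]; exact hM
  | cons J Ls ih =>
    obtain ⟨Mmid, hJ, hs⟩ := elimSeq_cons.mp h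
    exact ih hs (elim_stable hM hJ)

theorem elimSeq_split {I : SMInst n} {Q : List (List (Fin n × Fin n))}
    {M₀ M' : Fin n ≃ Fin n} {K : List (Fin n × Fin n)}
    (h : I.ElimSeq M₀ Q M') (hmem : K ∈ Q) :
    ∃ A B Mc Mc', Q = A ++ K :: B ∧ I.ElimSeq M₀ A Mc ∧ I.Elim Mc Mc' K ∧
      I.ElimSeq Mc' B M' := by
  induction Q generalizing M₀ with
  | nil => exact absurd hmem List.not_mem_nil
  | cons J Q' ih =>
    obtain ⟨Mmid, hJ, hs⟩ := elimSeq_cons.mp h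
    rcases List.mem_cons.mp hmem with rfl | hmem'
    · exact ⟨[], Q', M₀, Mmid, rfl, rfl, hJ, hs⟩
    · obtain ⟨A, B, Mc, Mc', hq, h1, h2, h3⟩ := ih hs hmem'
      exact ⟨J :: A, B, Mc, Mc', by rw [hq]; rfl, ⟨Mmid, hJ, h1⟩, h2, h3⟩

theorem untouched_eq {I : SMInst n} {a : Fin n} {P : List (List (Fin n × Fin n))}
    {Mc MA : Fin n ≃ Fin n} (h : I.ElimSeq Mc P MA)
    (hnt : ∀ Kb ∈ P, a ∉ Kb.map Prod.fst) : MA a = Mc a := by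
  induction P generalizing Mc with
  | nil => rw [elimSeq_nil.mp h]
  | cons J P' ih =>
    obtain ⟨Mmid, hJ, hs⟩ := elimSeq_cons.mp h
    rw [ih hs (fun Kb hKb => hnt Kb (List.mem_cons_of_mem J hKb)),
      elim_frozen hJ a (hnt J List.mem_cons_self)]

theorem last_touch {I : SMInst n} {a : Fin n} :
    ∀ (P : List (List (Fin n × Fin n))) (M₀ MA : Fin n ≃ Fin n), I.ElimSeq M₀ P MA →
    (∃ Kp ∈ P, a ∈ Kp.map Prod.fst) →
    ∃ A Kp B Mc Mc', P = A ++ Kp :: B ∧ I.ElimSeq M₀ A Mc ∧ I.Elim Mc Mc' Kp ∧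
      I.ElimSeq Mc' B MA ∧ a ∈ Kp.map Prod.fst ∧ (∀ Kb ∈ B, a ∉ Kb.map Prod.fst) := by
  intro P
  induction P with
  | nil => rintro M₀ MA _ ⟨Kp, hKp, _⟩; exact absurd hKp List.not_mem_nil
  | cons J P' ih =>
    rintro M₀ MA h hex
    obtain ⟨Mmid, hJ, hs⟩ := elimSeq_cons.mp h
    by_cases hex' : ∃ Kp ∈ P', a ∈ Kp.map Prod.fst
    · obtain ⟨A, Kp, B, Mc, Mc', hq, h1, h2, h3, h4, h5⟩ := ih Mmid MA hs hex'
      exact ⟨J :: A, Kp, B, Mc, Mc', by rw [hq]; rfl, ⟨Mmid, hJ, h1⟩, h2, h3, h4, h5⟩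
    · push_neg at hex'
      obtain ⟨Kp, hKp, hmem⟩ := hex
      rcases List.mem_cons.mp hKp with rfl | hKp'
      · exact ⟨[], Kp, P', M₀, Mmid, rfl, rfl, hJ, hs, hmem, hex'⟩
      · exact absurd hmem (hex' Kp hKp')

theorem first_touch {I : SMInst n} {a : Fin n} :
    ∀ (Q : List (List (Fin n × Fin n))) (Mc Mf : Fin n ≃ Fin n), I.ElimSeq Mc Q Mf →
    Mf a ≠ Mc a →
    ∃ A J B Mc1 Mc2, Q = A ++ J :: B ∧ I.ElimSeq Mc A Mc1 ∧ I.Elim Mc1 Mc2 J ∧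
      I.ElimSeq Mc2 B Mf ∧ Mc1 a = Mc a ∧ a ∈ J.map Prod.fst := by
  intro Q
  induction Q with
  | nil => intro Mc Mf h hne; exact absurd (congrArg (fun e => e a) (elimSeq_nil.mp h)) hne
  | cons J Q' ih =>
    intro Mc Mf h hne
    obtain ⟨Mmid, hJ, hs⟩ := elimSeq_cons.mp h
    by_cases hmem : a ∈ J.map Prod.fst
    · exact ⟨[], J, Q', Mc, Mmid, rfl, rfl, hJ, hs, rfl, hmem⟩
    · have hfr : Mmid a = Mc a := elim_frozen hJ a hmem
      have hne' : Mf a ≠ Mmid a := by rw [hfr]; exact hne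
      obtain ⟨A, J', B, Mc1, Mc2, hq, h1, h2, h3, h4, h5⟩ := ih Mmid Mf hs hne'
      exact ⟨J :: A, J', B, Mc1, Mc2, by rw [hq]; rfl, ⟨Mmid, hJ, h1⟩, h2, h3,
        by rw [h4, hfr], h5⟩

/-- an exposed rotation survives along any elimination path at whose end the
distinguished pair is still matched. -/
theorem persist {I : SMInst n} {K : List (Fin n × Fin n)} {p : Fin n × Fin n} (hpK : p ∈ K) :
    ∀ (P : List (List (Fin n × Fin n))) (Mc M₃ : Fin n ≃ Fin n), I.IsStable Mc →
      I.ElimSeq Mc P M₃ → I.ExposedIn Mc K → M₃ p.1 = p.2 → I.ExposedIn M₃ K := by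
  intro P
  induction P with
  | nil =>
    intro Mc M₃ _ hseq hexp _
    rw [elimSeq_nil.mp hseq]
    exact hexp
  | cons J P' ih =>
    intro Mc M₃ hMc hseq hexp hfix
    obtain ⟨Mmid, hJ, hseq'⟩ := elimSeq_cons.mp hseq
    by_cases htouch : ∃ q ∈ K, q.1 ∈ J.map Prod.fst
    · exfalso
      obtain ⟨q, hqK, hqJ⟩ := htouch
      obtain ⟨iJ, hiJ⟩ := mem_fst_iff.mp hqJ
      obtain ⟨iK, hiK⟩ := List.mem_iff_get.mp hqK
      have hJq : J.get iJ = q := by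
        refine Prod.ext hiJ ?_
        have h2 := exp_get_snd (elim_exp hJ) iJ
        rw [hiJ] at h2
        rw [← h2, exp_matched hexp q hqK]
      have hset : J.toFinset = K.toFinset :=
        set_eq_of_shared_pair (elim_exp hJ) hexp (hJq.trans hiK.symm)
      have hpJ : p ∈ J := List.mem_toFinset.mp (by rw [hset]; exact List.mem_toFinset.mpr hpK)
      obtain ⟨ip, hip⟩ := List.mem_iff_get.mp hpJ
      have hmove : Mmid p.1 = (J.get (nx ip)).2 := by
        have := elim_move hJ ip
        rwa [hip] at this
      have hlt : I.mrank p.1 p.2 < I.mrank p.1 (Mmid p.1) := by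
        rw [hmove]
        have := exp_b1 (elim_exp hJ) ip
        rwa [hip] at this
      have hle := seq_mono hseq' p.1
      rw [hfix] at hle
      omega
    · push_neg at htouch
      have hpairs : ∀ q ∈ K, Mmid q.1 = q.2 := fun q hq => by
        rw [elim_frozen hJ q.1 (htouch q hq)]
        exact exp_matched hexp q hq
      have hMmid : I.IsStable Mmid := elim_stable hMc hJ
      exact ih Mmid M₃ hMmid hseq'
        (transfer_down hexp hMmid (fun b => elim_mono hJ b) hpairs) hfix

/-- a pair belongs to at most one rotation (up to its set of pairs). -/
theorem unique_rotation_pair {I : SMInst n} {MK ML : Fin n ≃ Fin n}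
    {K L : List (Fin n × Fin n)}
    (hMK : I.IsStable MK) (hML : I.IsStable ML)
    (hK : I.ExposedIn MK K) (hL : I.ExposedIn ML L)
    {p : Fin n × Fin n} (hpK : p ∈ K) (hpL : p ∈ L) :
    K.toFinset = L.toFinset := by
  obtain ⟨M₃, hM₃, hcases, hd₁, hd₂⟩ := meet_exists_s13 hMK hML
  have hfix : M₃ p.1 = p.2 := by
    rcases hcases p.1 with hcc | hcc
    · rw [hcc]; exact exp_matched hK p hpK
    · rw [hcc]; exact exp_matched hL p hpL
  obtain ⟨P₁, hP₁⟩ := reach_s13 hMK hM₃ hd₁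
  obtain ⟨P₂, hP₂⟩ := reach_s13 hML hM₃ hd₂
  have hKexp₃ := persist hpK P₁ MK M₃ hMK hP₁ hK hfix
  have hLexp₃ := persist hpL P₂ ML M₃ hML hP₂ hL hfix
  obtain ⟨iK, hiK⟩ := List.mem_iff_get.mp hpK
  obtain ⟨iL, hiL⟩ := List.mem_iff_get.mp hpL
  exact set_eq_of_shared_pair hKexp₃ hLexp₃ (hiK.trans hiL.symm)

/-- if every rotation used to reach `MA` is (as a set) also used to reach `MB`,
then `MA` dominates `MB`. -/
theorem subset_dominates {I : SMInst n} {M₀ MA MB : Fin n ≃ Fin n}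
    {P Q : List (List (Fin n × Fin n))}
    (hP : I.ElimSeq M₀ P MA) (hQ : I.ElimSeq M₀ Q MB)
    (hsub : ∀ Kp ∈ P, ∃ Kq ∈ Q, Kq.toFinset = Kp.toFinset) :
    I.Dominates MA MB := by
  intro a
  by_cases htouch : ∃ Kp ∈ P, a ∈ Kp.map Prod.fst
  · obtain ⟨A, Kp, B, Mc, Mc', hq, h1, h2, h3, h4, h5⟩ := last_touch P M₀ MA hP htouch
    obtain ⟨i, hi⟩ := mem_fst_iff.mp h4
    -- MA a = the exit of a in Kp
    have hMAa : MA a = (Kp.get (nx i)).2 := by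
      rw [untouched_eq h3 h5, ← hi]
      exact elim_move h2 i
    -- find the same rotation in Q
    obtain ⟨Kq, hKqQ, hKqset⟩ := hsub Kp (by rw [hq]; simp)
    obtain ⟨A', B', Md, Md', hq', h1', h2', h3'⟩ := elimSeq_split hQ hKqQ
    -- a's pair in Kp is in Kq
    have hmemq : Kp.get i ∈ Kq := by
      refine List.mem_toFinset.mp ?_
      rw [hKqset]
      exact List.mem_toFinset.mpr (List.get_mem _ _)
    obtain ⟨i', hi'⟩ := List.mem_iff_get.mp hmemq
    have hexit := exit_eq (elim_exp h2') (elim_exp h2) hKqset hi'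
    -- after Kq in Q, a is matched to MA a
    have hMd'a : Md' a = MA a := by
      rw [hMAa, ← hexit, ← hi, ← hi']
      exact elim_move h2' i'
    have := seq_mono h3' a
    rw [hMd'a] at this
    exact this
  · push_neg at htouch
    have hMAa : MA a = M₀ a := untouched_eq hP htouch
    rw [hMAa]
    exact seq_mono hQ a

end SMInst


/-- minimality of `M↓` among dominated repairs: any stable matching
avoiding `(m, w)`, dominated by `M` and different from `M↓` is dominated by `M↓`. -/
theorem down_repair_minimal {n : ℕ} (I : SMInst n)
    (M₀ M : Fin n ≃ Fin n) (hM₀ : I.IsManOptimal M₀) (hM : I.IsStable M)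
    (S : Finset (Finset (Fin n × Fin n))) (hS : I.IsClosedF S)
    (hc : I.Corresponds M₀ S M) (m w : Fin n) (hmw : M m = w)
    (Le : List (Fin n × Fin n)) (hLe : I.IsRotation Le) (helim : (m, w) ∈ Le)
    (Sdn : Finset (Finset (Fin n × Fin n)))
    (hSdn : ∀ R, R ∈ Sdn ↔ R ∈ S ∨ R = Le.toFinset ∨ I.PrecedesR R Le.toFinset)
    (Md : Fin n ≃ Fin n) (hMd : I.IsStable Md) (hcd : I.Corresponds M₀ Sdn Md)
    (Mx : Fin n ≃ Fin n) (hMx : I.IsStable Mx) (hxavoid : Mx m ≠ w)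
    (hxdom : I.Dominates M Mx) (hxne : Mx ≠ Md) :
    I.Dominates Md Mx := by
  classical
  obtain ⟨P_M, hPnd, hPset, hPseq⟩ := hc
  obtain ⟨P_d, hDnd, hDset, hDseq⟩ := hcd
  obtain ⟨ML, hMLst, hLeexp⟩ := hLe
  -- a path from M down to Mx
  obtain ⟨Q', hQ'⟩ := SMInst.reach_s13 hM hMx hxdom
  -- the first time m moves along that path he is still matched to w
  have hne : Mx m ≠ M m := by rw [hmw]; exact hxavoid
  obtain ⟨A, J, B, Mc1, Mc2, hqeq, hA, hJ, hB, hMc1m, hmemJ⟩ :=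
    SMInst.first_touch Q' M Mx hQ' hne
  have hMc1st : I.IsStable Mc1 := SMInst.elimSeq_stable hA hM
  have hJexp := SMInst.elim_exp hJ
  obtain ⟨iJ, hiJ⟩ := SMInst.mem_fst_iff.mp hmemJ
  have hJmw : J.get iJ = (m, w) := by
    refine Prod.ext hiJ ?_
    have h2 := SMInst.exp_get_snd hJexp iJ
    rw [hiJ, hMc1m, hmw] at h2
    exact h2.symm
  have hmwJ : (m, w) ∈ J := by rw [← hJmw]; exact List.get_mem _ _
  -- the rotation moving m off w is Le, by uniqueness
  have hJLe : J.toFinset = Le.toFinset :=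
    SMInst.unique_rotation_pair hMc1st hMLst hJexp hLeexp hmwJ helim
  -- the full path from M₀ to Mx
  have hQ'' : I.ElimSeq M (A ++ J :: B) Mx := by rw [← hqeq]; exact hQ'
  have hQseq : I.ElimSeq M₀ (P_M ++ (A ++ J :: B)) Mx := SMInst.elimSeq_append hPseq hQ''
  -- every rotation of Sdn occurs (as a set) along this path
  have hcov : ∀ R ∈ Sdn, ∃ Kq ∈ P_M ++ (A ++ J :: B), Kq.toFinset = R := by
    intro R hR
    rcases (hSdn R).mp hR with hRS | hRLe | hRpre
    · rw [← hPset, List.mem_toFinset, List.mem_map] at hRS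
      obtain ⟨Kp, hKp, hKpset⟩ := hRS
      exact ⟨Kp, List.mem_append_left _ hKp, hKpset⟩
    · exact ⟨J, by simp, by rw [hJLe, hRLe]⟩
    · obtain ⟨L', L2, hrotL', hrotL2, hL'set, hL2set, hprec⟩ := hRpre
      obtain ⟨M2', hM2'st, hL2exp⟩ := hrotL2
      have hexpL2 : I.ExposedIn Mc1 L2 :=
        SMInst.exposed_of_set_eq hJexp hL2exp (by rw [hJLe, hL2set])
      have hseqPA : I.ElimSeq M₀ (P_M ++ A) Mc1 := SMInst.elimSeq_append hPseq hA
      obtain ⟨Kq, hKqmem, hKqset⟩ := hprec M₀ (P_M ++ A) Mc1 hM₀ hseqPA hMc1st hexpL2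
      refine ⟨Kq, ?_, by rw [hKqset, hL'set]⟩
      rcases List.mem_append.mp hKqmem with h | h
      · exact List.mem_append_left _ h
      · exact List.mem_append_right _ (List.mem_append_left _ h)
  -- conclude by the subset-domination principle
  refine SMInst.subset_dominates hDseq hQseq ?_
  intro Kp hKp
  have hmem : Kp.toFinset ∈ Sdn := by
    rw [← hDset]
    exact List.mem_toFinset.mpr (List.mem_map_of_mem hKp)
  exact hcov _ hmem
end
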